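/- arXiv:2404.10656 — 2 statements merged into one kernel-verified Lean document; each statement's English description precedes it below -/
import Mathlib

section
/- Let M1 and M2 be matroids on E1 and E2 with T = E1 ∩ E2, M1|T = M2|T, and suppose T is a modular flat of BOTH M1 and M2. A subset H ⊆ E1 ∪ E2 is a hyperplane of P_T(M1,M2) if and only if: (1) H ∩ E1 is a hyperplane of M1 that contains T, and E2 ⊆ H; or (2) H ∩ E2 is a hyperplane of M2 that contains T, and E1 ⊆ H; or (3) H ∩ E1 is a hyperplane of M1, H ∩ E2 is a hyperplane of M2, and T is not contained in H. -/
open Matroid Set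

variable {α : Type*}

/-- The rank of a set `X` in a matroid `M`: the supremum of the cardinalities of the
independent subsets of `X`. -/
noncomputable def mRk (M : Matroid α) (X : Set α) : ℕ :=
  sSup {n : ℕ | ∃ I, M.Indep I ∧ I ⊆ X ∧ I.ncard = n}

/-- The rank of a matroid `M`. -/
noncomputable def mRank (M : Matroid α) : ℕ := mRk M M.E

/-- `T` is a modular flat of `M`: `T` is a flat and
`r(T) + r(F) = r(T ∩ F) + r(T ∪ F)` holds for every flat `F` of `M`. -/
def IsModFlat (M : Matroid α) (T : Set α) : Prop :=
  M.IsFlat T ∧ ∀ F, M.IsFlat F → mRk M T + mRk M F = mRk M (T ∩ F) + mRk M (T ∪ F)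

/-- `H` is a hyperplane of `M`: a flat of rank `r(M) - 1`. -/
def IsHyp (M : Matroid α) (H : Set α) : Prop :=
  M.IsFlat H ∧ mRk M H + 1 = mRank M

/-- `F` is a corank-2 flat of `M`: a flat of rank `r(M) - 2`. -/
def IsCr2Flat (M : Matroid α) (F : Set α) : Prop :=
  M.IsFlat F ∧ mRk M F + 2 = mRank M

/-- `F` is a corank-3 flat of `M`: a flat of rank `r(M) - 3`. -/
def IsCr3Flat (M : Matroid α) (F : Set α) : Prop :=
  M.IsFlat F ∧ mRk M F + 3 = mRank M

/-- `(H1, H2, H3)` is a modular triple of hyperplanes of `M`: the three sets are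
hyperplanes, `F = H1 ∩ H2 ∩ H3` is a corank-2 flat, and `Hi ∩ Hj = F` for all `i ≠ j`. -/
def ModTriple (M : Matroid α) (H1 H2 H3 : Set α) : Prop :=
  IsHyp M H1 ∧ IsHyp M H2 ∧ IsHyp M H3 ∧
  IsCr2Flat M (H1 ∩ H2 ∩ H3) ∧
  H1 ∩ H2 = H1 ∩ H2 ∩ H3 ∧ H1 ∩ H3 = H1 ∩ H2 ∩ H3 ∧ H2 ∩ H3 = H1 ∩ H2 ∩ H3

/-- `M` is the generalized parallel connection of `M1` and `M2`: its ground set is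
`M1.E ∪ M2.E`, and its flats are exactly the sets `F ⊆ M1.E ∪ M2.E` such that
`F ∩ M1.E` is a flat of `M1` and `F ∩ M2.E` is a flat of `M2`. -/
def IsGPC (M1 M2 M : Matroid α) : Prop :=
  M.E = M1.E ∪ M2.E ∧
    ∀ F : Set α, M.IsFlat F ↔ F ⊆ M1.E ∪ M2.E ∧ M1.IsFlat (F ∩ M1.E) ∧ M2.IsFlat (F ∩ M2.E)

/-- The deletion `M \ D` of a set `D` from `M`. -/
def mDelete (M : Matroid α) (D : Set α) : Matroid α := M ↾ (M.E \ D)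

/-- The contraction `M / C`, obtained via duality as `(M✶ \ C)✶`. -/
def mContract (M : Matroid α) (C : Set α) : Matroid α := (M✶ ↾ (M.E \ C))✶

/-- `N` is a minor of `M`: `N` is obtained from `M` by a contraction followed by a
deletion. -/
def MinorOf (N M : Matroid α) : Prop :=
  ∃ C D : Set α, C ⊆ M.E ∧ D ⊆ M.E ∧ Disjoint C D ∧
    N = (mContract M C) ↾ ((M.E \ C) \ D)

/-- `C` is a circuit of `M`: a minimal dependent subset of the ground set. -/
def MCircuit (M : Matroid α) (C : Set α) : Prop :=
  C ⊆ M.E ∧ ¬ M.Indep C ∧ ∀ D ⊂ C, M.Indep D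

/-- `e` is a loop of `M`. -/
def MLoop (M : Matroid α) (e : α) : Prop := e ∈ M.E ∧ ¬ M.Indep {e}

/-- `e` is a coloop of `M`: an element of the ground set lying in every base. -/
def MColoop (M : Matroid α) (e : α) : Prop := e ∈ M.E ∧ ∀ B, M.IsBase B → e ∈ B

/-- `M` is simple: every subset of the ground set with at most two elements is
independent; equivalently, `M` has no loops and no two-element circuits. -/
def MSimple (M : Matroid α) : Prop := ∀ S ⊆ M.E, S.ncard ≤ 2 → M.Indep S

/-- `X` is co-independent in `M`: the complement `M.E \ X` is spanning. -/
def MCoindep (M : Matroid α) (X : Set α) : Prop := M.Spanning (M.E \ X)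

/-- The connected component of `M` containing `e`: the set of `f` in the ground set with
`e = f` or some circuit containing both `e` and `f`. -/
def MComponentOf (M : Matroid α) (e : α) : Set α :=
  {f | f ∈ M.E ∧ (e = f ∨ ∃ C, MCircuit M C ∧ e ∈ C ∧ f ∈ C)}

/-- `K` is a connected component of `M`. -/
def MComponent (M : Matroid α) (K : Set α) : Prop :=
  ∃ e ∈ M.E, K = MComponentOf M e

/-- The restriction `M|X` is (isomorphic to) the rank-2 uniform matroid `U_{2,n}`:
`X` is an `n`-element subset of the ground set and a subset of `X` is independent
exactly when it has at most 2 elements. -/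
def RestrIsU2 (M : Matroid α) (X : Set α) (n : ℕ) : Prop :=
  X ⊆ M.E ∧ X.ncard = n ∧ ∀ S ⊆ X, (M.Indep S ↔ S.ncard ≤ 2)

/-- `Θ` is a copy of the matroid `Θ_n`, with `X = {x 1, …, x n}` and `Y = {y 1, …, y n}`
disjoint, whose bases are exactly `Y`, the sets `(Y \ {y i}) ∪ {x j}` for `i ≠ j`, and
the sets `(Y \ Y') ∪ X'` with `Y' ⊆ Y`, `X' ⊆ X`, `|Y'| = |X'| = 2`. -/
def IsTheta (n : ℕ) (x y : Fin n → α) (Θ : Matroid α) : Prop :=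
  Function.Injective x ∧ Function.Injective y ∧ (∀ i j, x i ≠ y j) ∧
  Θ.E = Set.range x ∪ Set.range y ∧
  ∀ B : Set α, Θ.IsBase B ↔
    (B = Set.range y ∨
    (∃ i j, i ≠ j ∧ B = (Set.range y \ {y i}) ∪ {x j}) ∨
    (∃ P Q : Set (Fin n), P.ncard = 2 ∧ Q.ncard = 2 ∧
      B = (Set.range y \ (y '' P)) ∪ x '' Q))

/-- `M` is representable over the field `K`: there is a map from the ground set to a
`K`-vector space under which a subset of the ground set is independent in `M` exactly
when its image (as a family) is linearly independent. -/
def RepOver (K : Type*) [Field K] {α : Type*} (M : Matroid α) : Prop :=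
  ∃ (V : Type) (_ : AddCommGroup V) (_ : Module K V) (φ : α → V),
    ∀ I ⊆ M.E, (M.Indep I ↔ LinearIndependent K (fun e : I => φ e.1))

section RankTheory

variable {M : Matroid α} {I J X Y F F' H : Set α} {e : α}

lemma mRk_ub [M.Finite] (hI : M.IsBasis' I X) :
    ∀ n ∈ {n : ℕ | ∃ J, M.Indep J ∧ J ⊆ X ∧ J.ncard = n}, n ≤ I.ncard := by
  rintro n ⟨K, hK, hKX, rfl⟩
  obtain ⟨K', hK', hKK'⟩ := hK.subset_isBasis'_of_subset hKX
  have h1 : K.ncard ≤ K'.ncard :=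
    ncard_le_ncard hKK' (M.set_finite K' hK'.indep.subset_ground)
  have h2 : K'.encard = I.encard := hK'.encard_eq_encard hI
  calc K.ncard ≤ K'.ncard := h1
  _ = I.ncard := by rw [ncard_def, h2, ← ncard_def]

lemma mRk_eq_ncard [M.Finite] (hI : M.IsBasis' I X) : mRk M X = I.ncard := by
  refine le_antisymm (csSup_le ⟨0, ∅, M.empty_indep, empty_subset _, ncard_empty _⟩ (mRk_ub hI))
    (le_csSup ⟨I.ncard, mRk_ub hI⟩ ⟨I, hI.indep, hI.subset, rfl⟩)

lemma ncard_le_mRk [M.Finite] (hI : M.Indep I) (hIX : I ⊆ X) : I.ncard ≤ mRk M X := by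
  obtain ⟨J, hJ⟩ := M.exists_isBasis' X
  rw [mRk_eq_ncard hJ]
  exact mRk_ub hJ _ ⟨I, hI, hIX, rfl⟩

lemma mRk_mono [M.Finite] (h : X ⊆ Y) : mRk M X ≤ mRk M Y := by
  obtain ⟨I, hI⟩ := M.exists_isBasis' X
  rw [mRk_eq_ncard hI]
  exact ncard_le_mRk hI.indep (hI.subset.trans h)

lemma mRk_closure_eq (M : Matroid α) [M.Finite] (X : Set α) :
    mRk M (M.closure X) = mRk M X := by
  obtain ⟨I, hI⟩ := M.exists_isBasis' X
  rw [mRk_eq_ncard hI.isBasis_closure_right.isBasis', mRk_eq_ncard hI]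

lemma flat_closure (M : Matroid α) (X : Set α) : M.IsFlat (M.closure X) := by
  rw [Matroid.closure_def, sInter_eq_iInter]
  have hne : Nonempty {F // F ∈ {F : Set α | M.IsFlat F ∧ X ∩ M.E ⊆ F}} :=
    ⟨⟨M.E, M.ground_isFlat, inter_subset_right⟩⟩
  exact IsFlat.iInter fun F => F.2.1

lemma flat_inter (hF : M.IsFlat F) (hF' : M.IsFlat F') : M.IsFlat (F ∩ F') := by
  have h : F ∩ F' = ⋂ b : Bool, (if b then F else F') := by
    simp [Set.ext_iff]; tauto
  rw [h]
  exact IsFlat.iInter (by rintro (_|_) <;> simpa)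

lemma flat_lt [M.Finite] (hF : M.IsFlat F) (hF' : M.IsFlat F') (h : F ⊂ F') :
    mRk M F < mRk M F' := by
  obtain ⟨I, hI⟩ := M.exists_isBasis F hF.subset_ground
  obtain ⟨e, heF', heF⟩ := exists_of_ssubset h
  have heI : e ∉ I := fun h' => heF (hI.subset h')
  have hecl : e ∉ M.closure I := by
    rw [hI.closure_eq_closure, hF.closure]; exact heF
  have hins : M.Indep (insert e I) := by
    rw [hI.indep.insert_indep_iff_of_notMem heI]
    exact ⟨hF'.subset_ground heF', hecl⟩
  have hle := ncard_le_mRk hins (insert_subset heF' (hI.subset.trans h.subset))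
  rwa [ncard_insert_of_notMem heI (M.set_finite I hI.indep.subset_ground),
    ← mRk_eq_ncard hI.isBasis', Nat.add_one_le_iff] at hle

lemma flat_eq_of_le [M.Finite] (hF : M.IsFlat F) (hF' : M.IsFlat F') (h : F ⊆ F')
    (hr : mRk M F' ≤ mRk M F) : F = F' := by
  by_contra hne
  exact absurd hr (not_le.mpr (flat_lt hF hF' (ssubset_of_ne_of_subset hne h)))

lemma flat_cover [M.Finite] (hF : M.IsFlat F) (he : e ∈ M.E) (heF : e ∉ F) :
    M.IsFlat (M.closure (insert e F)) ∧ mRk M (M.closure (insert e F)) = mRk M F + 1 ∧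
      insert e F ⊆ M.closure (insert e F) := by
  obtain ⟨I, hI⟩ := M.exists_isBasis F hF.subset_ground
  have heI : e ∉ I := fun h' => heF (hI.subset h')
  have hecl : e ∉ M.closure I := by
    rw [hI.closure_eq_closure, hF.closure]; exact heF
  have hins : M.Indep (insert e I) := by
    rw [hI.indep.insert_indep_iff_of_notMem heI]; exact ⟨he, hecl⟩
  have hb : M.IsBasis (insert e I) (insert e F) := by
    rw [isBasis_iff_indep_closure]
    refine ⟨hins, insert_subset
      (M.subset_closure _ hins.subset_ground (mem_insert _ _)) ?_, insert_subset_insert hI.subset⟩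
    calc F = M.closure I := by rw [hI.closure_eq_closure, hF.closure]
    _ ⊆ M.closure (insert e I) := M.closure_subset_closure (subset_insert _ _)
  refine ⟨flat_closure M _, ?_, M.subset_closure _ (insert_subset he hF.subset_ground)⟩
  rw [mRk_closure_eq, mRk_eq_ncard hb.isBasis',
    ncard_insert_of_notMem heI (M.set_finite I hI.indep.subset_ground), mRk_eq_ncard hI.isBasis']

lemma mRk_submod [M.Finite] (hX : X ⊆ M.E) (hY : Y ⊆ M.E) :
    mRk M (X ∪ Y) + mRk M (X ∩ Y) ≤ mRk M X + mRk M Y := by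
  obtain ⟨I0, hI0⟩ := M.exists_isBasis (X ∩ Y) ((inter_subset_left).trans hX)
  obtain ⟨I1, hI1, hI01⟩ := hI0.indep.subset_isBasis_of_subset (hI0.subset.trans inter_subset_left) hX
  obtain ⟨J, hJ, hI1J⟩ := hI1.indep.subset_isBasis_of_subset
    (hI1.subset.trans subset_union_left) (union_subset hX hY)
  have hJX : J ∩ X = I1 :=
    (hI1.eq_of_subset_indep (hJ.indep.subset inter_subset_left)
      (subset_inter hI1J hI1.subset) inter_subset_right).symm
  have hJfin : J.Finite := M.set_finite J hJ.indep.subset_ground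
  have hcup : (J ∩ X) ∪ (J ∩ Y) = J := by
    rw [← inter_union_distrib_left]; exact inter_eq_left.mpr hJ.subset
  have hcard := ncard_union_add_ncard_inter (J ∩ X) (J ∩ Y) (hJfin.inter_of_left _)
    (hJfin.inter_of_left _)
  rw [hcup, ← inter_inter_distrib_left] at hcard
  have hI0J : I0.ncard ≤ (J ∩ (X ∩ Y)).ncard :=
    ncard_le_ncard (subset_inter (hI01.trans hI1J) hI0.subset) (hJfin.inter_of_left _)
  have hJY : (J ∩ Y).ncard ≤ mRk M Y :=
    ncard_le_mRk (hJ.indep.subset inter_subset_left) inter_subset_right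
  rw [mRk_eq_ncard hJ.isBasis', mRk_eq_ncard hI0.isBasis', mRk_eq_ncard hI1.isBasis', ← hJX]
  omega

end RankTheory

section Hyp

variable {M M1 M2 : Matroid α} {H F X I T : Set α} {e : α}

lemma isHyp_iff_max [M.Finite] :
    IsHyp M H ↔ M.IsFlat H ∧ H ≠ M.E ∧ ∀ F, M.IsFlat F → H ⊆ F → F = H ∨ F = M.E := by
  unfold IsHyp mRank
  constructor
  · rintro ⟨hHf, hr⟩
    have hne : H ≠ M.E := by rintro rfl; omega
    refine ⟨hHf, hne, fun F hF hHF => ?_⟩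
    by_cases hFH : F = H
    · exact Or.inl hFH
    have hlt := flat_lt hHf hF (ssubset_of_ne_of_subset (Ne.symm hFH) hHF)
    have hle := mRk_mono (M := M) hF.subset_ground
    exact Or.inr (flat_eq_of_le hF M.ground_isFlat hF.subset_ground (by omega))
  · rintro ⟨hHf, hne, hmax⟩
    refine ⟨hHf, ?_⟩
    obtain ⟨e, heE, heH⟩ : ∃ e ∈ M.E, e ∉ H := by
      by_contra h; push_neg at h; exact hne (hHf.subset_ground.antisymm h)
    obtain ⟨hGf, hGr, hGsub⟩ := flat_cover hHf heE heH
    rcases hmax _ hGf ((subset_insert _ _).trans hGsub) with h | h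
    · exact absurd (h ▸ hGsub (mem_insert _ _)) heH
    · rw [← h, hGr]

lemma indep_transfer (hres : M1 ↾ T = M2 ↾ T) (hX : I ⊆ T) :
    M1.Indep I ↔ M2.Indep I := by
  constructor <;> intro h
  · have h2 : (M1 ↾ T).Indep I := restrict_indep_iff.mpr ⟨h, hX⟩
    rw [hres] at h2
    exact h2.of_restrict
  · have h2 : (M2 ↾ T).Indep I := restrict_indep_iff.mpr ⟨h, hX⟩
    rw [← hres] at h2
    exact h2.of_restrict

lemma mRk_transfer (hres : M1 ↾ T = M2 ↾ T) (hX : X ⊆ T) :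
    mRk M1 X = mRk M2 X := by
  unfold mRk
  congr 1
  ext n
  simp only [mem_setOf_eq]
  constructor
  · rintro ⟨I, hI, hIX, rfl⟩
    exact ⟨I, (indep_transfer hres (hIX.trans hX)).1 hI, hIX, rfl⟩
  · rintro ⟨I, hI, hIX, rfl⟩
    exact ⟨I, (indep_transfer hres (hIX.trans hX)).2 hI, hIX, rfl⟩

lemma flat_transfer [M2.Finite] (hres : M1 ↾ T = M2 ↾ T) (hT1 : T ⊆ M1.E)
    (hT2 : M2.IsFlat T) (hX : X ⊆ T) (hXflat : M1.IsFlat X) : M2.IsFlat X := by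
  have hXE2 : X ⊆ M2.E := hX.trans hT2.subset_ground
  obtain ⟨I, hI⟩ := M2.exists_isBasis X hXE2
  have hI1 : M1.IsBasis I X := by
    rw [isBasis_iff (hX.trans hT1)]
    refine ⟨(indep_transfer hres (hI.subset.trans hX)).2 hI.indep, hI.subset,
      fun J hJ hIJ hJX => ?_⟩
    exact hI.eq_of_subset_indep ((indep_transfer hres (hJX.trans hX)).1 hJ) hIJ hJX
  have hcl : M2.closure X ⊆ X := by
    intro e he
    by_contra heX
    have heT : e ∈ T := by
      have := (M2.closure_subset_closure hX).trans hT2.closure.subset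
      exact this he
    have heI : e ∉ I := fun h => heX (hI.subset h)
    have hnotindep2 : ¬ M2.Indep (insert e I) := by
      intro hcon
      rw [hI.indep.insert_indep_iff_of_notMem heI] at hcon
      exact hcon.2 (hI.closure_eq_closure ▸ he)
    have hindep1 : M1.Indep (insert e I) := by
      rw [hI1.indep.insert_indep_iff_of_notMem heI]
      refine ⟨hT1 heT, ?_⟩
      rw [hI1.closure_eq_closure, hXflat.closure]
      exact heX
    exact hnotindep2 ((indep_transfer hres (insert_subset heT (hI.subset.trans hX))).1 hindep1)
  have : M2.closure X = X := hcl.antisymm (M2.subset_closure X hXE2)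
  exact this ▸ flat_closure M2 X

end Hyp

section Key

variable {M M1 M2 : Matroid α}

lemma key_lemma (M1 M2 M : Matroid α) [M1.Finite] [M2.Finite] (T : Set α)
    (hT : T = M1.E ∩ M2.E) (hres : M1 ↾ T = M2 ↾ T)
    (hmod1 : M1.IsFlat T ∧ ∀ F, M1.IsFlat F →
      mRk M1 T + mRk M1 F = mRk M1 (T ∩ F) + mRk M1 (T ∪ F))
    (hmod2 : M2.IsFlat T ∧ ∀ F, M2.IsFlat F →
      mRk M2 T + mRk M2 F = mRk M2 (T ∩ F) + mRk M2 (T ∪ F))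
    (hME : M.E = M1.E ∪ M2.E)
    (hMF : ∀ F : Set α, M.IsFlat F ↔
      F ⊆ M1.E ∪ M2.E ∧ M1.IsFlat (F ∩ M1.E) ∧ M2.IsFlat (F ∩ M2.E))
    {H : Set α} (hH : M.IsFlat H)
    (hmax : ∀ F, M.IsFlat F → H ⊆ F → F = H ∨ F = M.E)
    (hTH : ¬ T ⊆ H) {G : Set α} (hG : M1.IsFlat G) (hHG : H ∩ M1.E ⊆ G) :
    G = H ∩ M1.E ∨ G = M1.E := by
  subst hT
  set T := M1.E ∩ M2.E with hTdef
  by_contra hcon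
  push_neg at hcon
  obtain ⟨hGne1, hGne2⟩ := hcon
  set H1 := H ∩ M1.E with hH1def
  set H2 := H ∩ M2.E with hH2def
  have hT1 : M1.IsFlat T := hmod1.1
  have hT2 : M2.IsFlat T := hmod2.1
  have hT1s : T ⊆ M1.E := inter_subset_left
  have hT2s : T ⊆ M2.E := inter_subset_right
  obtain ⟨hHsub, hH1f, hH2f⟩ := (hMF H).1 hH
  have hHeq : H = H1 ∪ H2 := by
    apply subset_antisymm
    · intro x hx
      rcases hHsub hx with h | h
      · exact Or.inl ⟨hx, h⟩
      · exact Or.inr ⟨hx, h⟩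
    · exact union_subset inter_subset_left inter_subset_left
  have hH2ne : H2 ≠ M2.E := by
    intro h
    exact hTH fun t ht => by
      have : t ∈ H2 := h ▸ hT2s ht
      exact this.1
  -- helper to finish with a contradiction
  have finish : ∀ F : Set α, M.IsFlat F → H ⊆ F → F ∩ M1.E ≠ H1 → F ∩ M1.E ≠ M1.E → False := by
    intro F hF hHF hne1 hne2
    rcases hmax F hF hHF with h | h
    · exact hne1 (by rw [h])
    · refine hne2 ?_
      rw [h, hME]
      exact inter_eq_right.mpr subset_union_left
  -- find the covering flat G1
  have hH1G : H1 ⊆ G := hHG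
  obtain ⟨e, heG, heH1⟩ := exists_of_ssubset (ssubset_of_ne_of_subset (Ne.symm hGne1) hH1G)
  have heE1 : e ∈ M1.E := hG.subset_ground heG
  obtain ⟨hG1f, hG1r, hG1sub⟩ := flat_cover hH1f heE1 heH1
  set G1 := M1.closure (insert e H1) with hG1def
  rw [← hH1def] at hG1r hG1sub
  have hG1G : G1 ⊆ G := by
    have h1 : insert e H1 ⊆ G := insert_subset heG hH1G
    calc G1 ⊆ M1.closure G := M1.closure_subset_closure h1
    _ = G := hG.closure
  have hG1E : G1 ⊆ M1.E := M1.closure_subset_ground _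
  have hG1ne : G1 ≠ M1.E := by
    intro h
    exact hGne2 (hG.subset_ground.antisymm (h ▸ hG1G))
  have hH1G1 : H1 ⊆ G1 := (subset_insert e H1).trans hG1sub
  have hG1H1 : G1 ≠ H1 := fun h => heH1 (h ▸ hG1sub (mem_insert _ _))
  by_cases hA : T ∩ G1 = T ∩ H1
  · -- subcase A : traces agree; F = G1 ∪ H2 is an intermediate flat
    have hFE1 : (G1 ∪ H2) ∩ M1.E = G1 := by
      apply subset_antisymm
      · rintro x ⟨hx, hxE⟩
        rcases hx with h | h
        · exact h
        · exact hH1G1 ⟨h.1, hxE⟩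
      · exact fun x hx => ⟨Or.inl hx, hG1E hx⟩
    have hFE2 : (G1 ∪ H2) ∩ M2.E = H2 := by
      apply subset_antisymm
      · rintro x ⟨hx, hxE⟩
        rcases hx with h | h
        · have hxT : x ∈ T := ⟨hG1E h, hxE⟩
          have hx1 : x ∈ T ∩ H1 := hA ▸ ⟨hxT, h⟩
          exact ⟨hx1.2.1, hxE⟩
        · exact h
      · exact fun x hx => ⟨Or.inr hx, hx.2⟩
    have hFflat : M.IsFlat (G1 ∪ H2) := by
      rw [hMF]
      refine ⟨union_subset (hG1E.trans subset_union_left)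
        (inter_subset_right.trans subset_union_right), ?_, ?_⟩
      · rw [hFE1]; exact hG1f
      · rw [hFE2]; exact hH2f
    have hHF : H ⊆ G1 ∪ H2 := by
      rw [hHeq]
      exact union_subset_union_left H2 hH1G1
    exact finish _ hFflat hHF (by rw [hFE1]; exact hG1H1) (by rw [hFE1]; exact hG1ne)
  · -- subcase B : strict trace growth
    have hTH1flat : M1.IsFlat (T ∩ H1) := flat_inter hT1 hH1f
    have hTG1flat : M1.IsFlat (T ∩ G1) := flat_inter hT1 hG1f
    have hsubTH1 : T ∩ H1 ⊆ T ∩ G1 := inter_subset_inter_right T hH1G1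
    have hjump1 : mRk M1 (T ∩ G1) = mRk M1 (T ∩ H1) + 1 := by
      have m1 := hmod1.2 G1 hG1f
      have m2 := hmod1.2 H1 hH1f
      have l1 : mRk M1 (T ∩ H1) < mRk M1 (T ∩ G1) :=
        flat_lt hTH1flat hTG1flat (ssubset_of_ne_of_subset (Ne.symm hA) hsubTH1)
      have l2 : mRk M1 (T ∪ H1) ≤ mRk M1 (T ∪ G1) :=
        mRk_mono (union_subset_union_right T hH1G1)
      rw [hG1r] at m1
      omega
    set S := T ∩ G1 with hSdef
    have hSsubT : S ⊆ T := inter_subset_left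
    have hSsubG1 : S ⊆ G1 := inter_subset_right
    have hSE2 : S ⊆ M2.E := hSsubT.trans hT2s
    have hSflat2 : M2.IsFlat S := flat_transfer hres hT1s hT2 hSsubT hTG1flat
    have hTH1flat2 : M2.IsFlat (T ∩ H1) :=
      flat_transfer hres hT1s hT2 inter_subset_left hTH1flat
    have hH2SE2 : H2 ∪ S ⊆ M2.E := union_subset inter_subset_right hSE2
    set F2 := M2.closure (H2 ∪ S) with hF2def
    have hH2F2 : H2 ⊆ F2 := subset_union_left.trans (M2.subset_closure _ hH2SE2)
    have hSF2 : S ⊆ F2 := subset_union_right.trans (M2.subset_closure _ hH2SE2)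
    have hF2flat : M2.IsFlat F2 := flat_closure M2 _
    have hF2E : F2 ⊆ M2.E := M2.closure_subset_ground _
    obtain ⟨t, htS, htTH1⟩ := exists_of_ssubset
      (ssubset_of_ne_of_subset (fun h => hA h.symm) hsubTH1)
    have htT : t ∈ T := htS.1
    have htH : t ∉ H := fun h => htTH1 ⟨htT, h, hT1s htT⟩
    have htH2 : t ∉ H2 := fun h => htH h.1
    have hF2neH2 : F2 ≠ H2 := fun h => htH2 (h ▸ hSF2 htS)
    have hH2S : H2 ∩ S = T ∩ H1 := by
      apply subset_antisymm
      · rintro x ⟨hx2, hxS⟩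
        exact ⟨hxS.1, hx2.1, hT1s hxS.1⟩
      · rintro x ⟨hxT, hxH, hxE1⟩
        exact ⟨⟨hxH, hT2s hxT⟩, hxT, hH1G1 ⟨hxH, hxE1⟩⟩
    have hsm := mRk_submod (M := M2) (X := H2) (Y := S) inter_subset_right hSE2
    rw [hH2S] at hsm
    have hrF2 : mRk M2 F2 = mRk M2 (H2 ∪ S) := mRk_closure_eq M2 _
    have hS2 : mRk M2 S = mRk M2 (T ∩ H1) + 1 := by
      rw [← mRk_transfer hres hSsubT, ← mRk_transfer hres (inter_subset_left (t := H1))]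
      exact hjump1
    have hlt : mRk M2 H2 < mRk M2 F2 :=
      flat_lt hH2f hF2flat (ssubset_of_ne_of_subset (Ne.symm hF2neH2) hH2F2)
    have hrF2eq : mRk M2 F2 = mRk M2 H2 + 1 := by omega
    have hTH2eq : T ∩ H2 = T ∩ H1 := by
      apply subset_antisymm
      · rintro x ⟨hxT, hxH, _⟩
        exact ⟨hxT, hxH, hT1s hxT⟩
      · rintro x ⟨hxT, hxH, _⟩
        exact ⟨hxT, hxH, hT2s hxT⟩
    by_cases hB1 : F2 = M2.E
    · -- subcase B1 : then T ⊆ G1 and F = G1 ∪ M2.E works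
      have hTH2E : M2.closure (T ∪ H2) = M2.E := by
        apply subset_antisymm (M2.closure_subset_ground _)
        have h1 : F2 ⊆ M2.closure (T ∪ H2) :=
          M2.closure_subset_closure
            (union_subset subset_union_right (hSsubT.trans subset_union_left))
        rw [hB1] at h1
        exact h1
      have m := hmod2.2 H2 hH2f
      have hTunion : mRk M2 (T ∪ H2) = mRk M2 M2.E := by
        rw [← hTH2E, mRk_closure_eq]
      rw [hTH2eq, hTunion] at m
      have hE2r : mRk M2 M2.E = mRk M2 H2 + 1 := by rw [← hB1]; exact hrF2eq
      have hTr : mRk M2 T = mRk M2 S := by omega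
      have hST : S = T := by
        refine flat_eq_of_le hTG1flat hT1 hSsubT ?_
        have h1 : mRk M1 S = mRk M2 S := mRk_transfer hres hSsubT
        have h2 : mRk M1 T = mRk M2 T := mRk_transfer hres Subset.rfl
        omega
      have hTG1 : T ⊆ G1 := by
        intro x hx
        have : x ∈ S := hST.symm ▸ hx
        exact this.2
      have hFE1 : (G1 ∪ M2.E) ∩ M1.E = G1 := by
        apply subset_antisymm
        · rintro x ⟨hx, hxE⟩
          rcases hx with h | h
          · exact h
          · exact hTG1 ⟨hxE, h⟩
        · exact fun x hx => ⟨Or.inl hx, hG1E hx⟩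
      have hFE2 : (G1 ∪ M2.E) ∩ M2.E = M2.E := inter_eq_right.mpr subset_union_right
      have hFflat : M.IsFlat (G1 ∪ M2.E) := by
        rw [hMF]
        refine ⟨union_subset (hG1E.trans subset_union_left) subset_union_right, ?_, ?_⟩
        · rw [hFE1]; exact hG1f
        · rw [hFE2]; exact M2.ground_isFlat
      have hHF : H ⊆ G1 ∪ M2.E := by
        rw [hHeq]
        exact union_subset (hH1G1.trans subset_union_left)
          (inter_subset_right.trans subset_union_right)
      exact finish _ hFflat hHF (by rw [hFE1]; exact hG1H1) (by rw [hFE1]; exact hG1ne)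
    · -- subcase B2 : F = G1 ∪ F2 works
      have m1 := hmod2.2 F2 hF2flat
      have m2 := hmod2.2 H2 hH2f
      have hTF2ge : mRk M2 S ≤ mRk M2 (T ∩ F2) := mRk_mono (subset_inter hSsubT hSF2)
      have hTUmono : mRk M2 (T ∪ H2) ≤ mRk M2 (T ∪ F2) :=
        mRk_mono (union_subset_union_right T hH2F2)
      rw [hTH2eq] at m2
      have hTF2flat : M2.IsFlat (T ∩ F2) := flat_inter hT2 hF2flat
      have hSeq : S = T ∩ F2 :=
        flat_eq_of_le hSflat2 hTF2flat (subset_inter hSsubT hSF2) (by omega)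
      have hFE1 : (G1 ∪ F2) ∩ M1.E = G1 := by
        apply subset_antisymm
        · rintro x ⟨hx, hxE⟩
          rcases hx with h | h
          · exact h
          · have hxS : x ∈ S := hSeq ▸ ⟨⟨hxE, hF2E h⟩, h⟩
            exact hSsubG1 hxS
        · exact fun x hx => ⟨Or.inl hx, hG1E hx⟩
      have hFE2 : (G1 ∪ F2) ∩ M2.E = F2 := by
        apply subset_antisymm
        · rintro x ⟨hx, hxE⟩
          rcases hx with h | h
          · have hxS : x ∈ S := ⟨⟨hG1E h, hxE⟩, h⟩
            exact hSF2 hxS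
          · exact h
        · exact fun x hx => ⟨Or.inr hx, hF2E hx⟩
      have hFflat : M.IsFlat (G1 ∪ F2) := by
        rw [hMF]
        refine ⟨union_subset (hG1E.trans subset_union_left) (hF2E.trans subset_union_right),
          ?_, ?_⟩
        · rw [hFE1]; exact hG1f
        · rw [hFE2]; exact hF2flat
      have hHF : H ⊆ G1 ∪ F2 := by
        rw [hHeq]
        exact union_subset (hH1G1.trans subset_union_left) (hH2F2.trans subset_union_right)
      exact finish _ hFflat hHF (by rw [hFE1]; exact hG1H1) (by rw [hFE1]; exact hG1ne)

end Key

lemma split_union {α : Type*} {F A B : Set α} (h : F ⊆ A ∪ B) :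
    F = (F ∩ A) ∪ (F ∩ B) := by
  rw [← inter_union_distrib_left]
  exact (inter_eq_left.mpr h).symm

section Helpers

variable {α : Type*} {M M1 M2 : Matroid α}

lemma rev1_lemma (M1 M2 M : Matroid α)
    (hME : M.E = M1.E ∪ M2.E)
    (hMF : ∀ F : Set α, M.IsFlat F ↔
      F ⊆ M1.E ∪ M2.E ∧ M1.IsFlat (F ∩ M1.E) ∧ M2.IsFlat (F ∩ M2.E))
    {H : Set α} (hHsub : H ⊆ M1.E ∪ M2.E)
    (h1flat : M1.IsFlat (H ∩ M1.E)) (h1ne : H ∩ M1.E ≠ M1.E)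
    (h1max : ∀ G, M1.IsFlat G → H ∩ M1.E ⊆ G → G = H ∩ M1.E ∨ G = M1.E)
    (hE2H : M2.E ⊆ H) :
    M.IsFlat H ∧ H ≠ M.E ∧ ∀ F, M.IsFlat F → H ⊆ F → F = H ∨ F = M.E := by
  have hHE2 : H ∩ M2.E = M2.E := inter_eq_right.mpr hE2H
  have hflat : M.IsFlat H := (hMF H).2 ⟨hHsub, h1flat, by rw [hHE2]; exact M2.ground_isFlat⟩
  refine ⟨hflat, ?_, ?_⟩
  · intro h
    apply h1ne
    rw [h, hME]
    exact inter_eq_right.mpr subset_union_left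
  · intro F hF hHF
    obtain ⟨hFsub, hF1, hF2⟩ := (hMF F).1 hF
    have hFeq : F = (F ∩ M1.E) ∪ (F ∩ M2.E) := split_union hFsub
    have hF2E : F ∩ M2.E = M2.E := inter_eq_right.mpr (hE2H.trans hHF)
    rcases h1max _ hF1 (inter_subset_inter_left _ hHF) with h | h
    · left
      rw [hFeq, h, hF2E, ← hHE2, ← split_union hHsub]
    · right
      rw [hFeq, h, hF2E, hME]

lemma rev3_lemma (M1 M2 M : Matroid α) (T : Set α) (hT : T = M1.E ∩ M2.E)
    (hME : M.E = M1.E ∪ M2.E)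
    (hMF : ∀ F : Set α, M.IsFlat F ↔
      F ⊆ M1.E ∪ M2.E ∧ M1.IsFlat (F ∩ M1.E) ∧ M2.IsFlat (F ∩ M2.E))
    {H : Set α} (hHsub : H ⊆ M1.E ∪ M2.E)
    (h1flat : M1.IsFlat (H ∩ M1.E)) (h1ne : H ∩ M1.E ≠ M1.E)
    (h1max : ∀ G, M1.IsFlat G → H ∩ M1.E ⊆ G → G = H ∩ M1.E ∨ G = M1.E)
    (h2flat : M2.IsFlat (H ∩ M2.E)) (h2ne : H ∩ M2.E ≠ M2.E)
    (h2max : ∀ G, M2.IsFlat G → H ∩ M2.E ⊆ G → G = H ∩ M2.E ∨ G = M2.E)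
    (hTH : ¬ T ⊆ H) :
    M.IsFlat H ∧ H ≠ M.E ∧ ∀ F, M.IsFlat F → H ⊆ F → F = H ∨ F = M.E := by
  subst hT
  obtain ⟨t, htT, htH⟩ := not_subset.mp hTH
  have hflat : M.IsFlat H := (hMF H).2 ⟨hHsub, h1flat, h2flat⟩
  refine ⟨hflat, ?_, ?_⟩
  · intro h
    apply h1ne
    rw [h, hME]
    exact inter_eq_right.mpr subset_union_left
  · intro F hF hHF
    obtain ⟨hFsub, hF1, hF2⟩ := (hMF F).1 hF
    have hFeq : F = (F ∩ M1.E) ∪ (F ∩ M2.E) := split_union hFsub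
    rcases h1max _ hF1 (inter_subset_inter_left _ hHF) with h1 | h1 <;>
      rcases h2max _ hF2 (inter_subset_inter_left _ hHF) with h2 | h2
    · left
      rw [hFeq, h1, h2, ← split_union hHsub]
    · exfalso
      have htF : t ∈ F := by
        have : t ∈ F ∩ M2.E := by rw [h2]; exact htT.2
        exact this.1
      have ht1 : t ∈ H ∩ M1.E := by rw [← h1]; exact ⟨htF, htT.1⟩
      exact htH ht1.1
    · exfalso
      have htF : t ∈ F := by
        have : t ∈ F ∩ M1.E := by rw [h1]; exact htT.1
        exact this.1
      have ht2 : t ∈ H ∩ M2.E := by rw [← h2]; exact ⟨htF, htT.2⟩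
      exact htH ht2.1
    · right
      rw [hFeq, h1, h2, hME]

lemma fwd1_lemma (M1 M2 M : Matroid α) (T : Set α) (hT : T = M1.E ∩ M2.E)
    (hME : M.E = M1.E ∪ M2.E)
    (hMF : ∀ F : Set α, M.IsFlat F ↔
      F ⊆ M1.E ∪ M2.E ∧ M1.IsFlat (F ∩ M1.E) ∧ M2.IsFlat (F ∩ M2.E))
    {H : Set α} (hH : M.IsFlat H) (hHne : H ≠ M.E)
    (hmax : ∀ F, M.IsFlat F → H ⊆ F → F = H ∨ F = M.E)
    (hH2 : H ∩ M2.E = M2.E) :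
    (M1.IsFlat (H ∩ M1.E) ∧ H ∩ M1.E ≠ M1.E ∧
      (∀ G, M1.IsFlat G → H ∩ M1.E ⊆ G → G = H ∩ M1.E ∨ G = M1.E)) ∧ T ⊆ H ∩ M1.E := by
  subst hT
  obtain ⟨hHsub, hH1f, _⟩ := (hMF H).1 hH
  have hE2H : M2.E ⊆ H := by rw [← hH2]; exact inter_subset_left
  have hTH1 : M1.E ∩ M2.E ⊆ H ∩ M1.E := fun x hx => ⟨hE2H hx.2, hx.1⟩
  have h1ne : H ∩ M1.E ≠ M1.E := by
    intro h
    apply hHne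
    refine hH.subset_ground.antisymm ?_
    rw [hME]
    refine union_subset ?_ hE2H
    rw [← h]
    exact inter_subset_left
  refine ⟨⟨hH1f, h1ne, ?_⟩, hTH1⟩
  intro G hG hHG
  by_contra hcon
  push_neg at hcon
  obtain ⟨hne1, hne2⟩ := hcon
  have hGE1 : G ⊆ M1.E := hG.subset_ground
  have hFE1 : (G ∪ M2.E) ∩ M1.E = G := by
    apply subset_antisymm
    · rintro x ⟨hx, hxE⟩
      rcases hx with h | h
      · exact h
      · exact hHG (hTH1 ⟨hxE, h⟩)
    · exact fun x hx => ⟨Or.inl hx, hGE1 hx⟩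
  have hFE2 : (G ∪ M2.E) ∩ M2.E = M2.E := inter_eq_right.mpr subset_union_right
  have hFflat : M.IsFlat (G ∪ M2.E) := by
    rw [hMF]
    refine ⟨union_subset (hGE1.trans subset_union_left) subset_union_right, ?_, ?_⟩
    · rw [hFE1]; exact hG
    · rw [hFE2]; exact M2.ground_isFlat
  have hHF : H ⊆ G ∪ M2.E := by
    rw [split_union hHsub]
    exact union_subset (hHG.trans subset_union_left)
      (inter_subset_right.trans subset_union_right)
  rcases hmax _ hFflat hHF with h | h
  · exact hne1 (by rw [← hFE1, h])
  · apply hne2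
    rw [← hFE1, h, hME]
    exact inter_eq_right.mpr subset_union_left

end Helpers

/-- Hyperplanes of the generalized parallel connection when `T` is a
modular flat of both `M1` and `M2`. -/
theorem gpc_hyperplanes (M1 M2 M : Matroid α) [M1.Finite] [M2.Finite]
    (E1 E2 T : Set α) (hE1 : M1.E = E1) (hE2 : M2.E = E2) (hT : T = E1 ∩ E2)
    (hres : M1 ↾ T = M2 ↾ T) (hmod1 : IsModFlat M1 T) (hmod2 : IsModFlat M2 T)
    (hM : IsGPC M1 M2 M) :
    ∀ H ⊆ E1 ∪ E2, (IsHyp M H ↔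
      (IsHyp M1 (H ∩ E1) ∧ T ⊆ H ∩ E1 ∧ E2 ⊆ H) ∨
      (IsHyp M2 (H ∩ E2) ∧ T ⊆ H ∩ E2 ∧ E1 ⊆ H) ∨
      (IsHyp M1 (H ∩ E1) ∧ IsHyp M2 (H ∩ E2) ∧ ¬ T ⊆ H)) := by
  subst hE1
  subst hE2
  subst hT
  obtain ⟨hME, hMF⟩ := hM
  haveI : M.Finite := ⟨by rw [hME]; exact M1.ground_finite.union M2.ground_finite⟩
  have hMF' : ∀ F : Set α, M.IsFlat F ↔
      F ⊆ M2.E ∪ M1.E ∧ M2.IsFlat (F ∩ M2.E) ∧ M1.IsFlat (F ∩ M1.E) := by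
    intro F
    rw [hMF F, union_comm M2.E M1.E]
    tauto
  have hME' : M.E = M2.E ∪ M1.E := by rw [hME, union_comm]
  intro H hHsub
  simp only [isHyp_iff_max]
  constructor
  · rintro ⟨hHf, hHne, hmax⟩
    obtain ⟨_, hH1f, hH2f⟩ := (hMF H).1 hHf
    by_cases hc2 : H ∩ M2.E = M2.E
    · obtain ⟨htriple, hTsub⟩ := fwd1_lemma M1 M2 M _ rfl hME hMF hHf hHne hmax hc2
      exact Or.inl ⟨htriple, hTsub, by rw [← hc2]; exact inter_subset_left⟩
    by_cases hc1 : H ∩ M1.E = M1.E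
    · obtain ⟨htriple, hTsub⟩ := fwd1_lemma M2 M1 M (M1.E ∩ M2.E)
        (inter_comm M1.E M2.E) hME' hMF' hHf hHne hmax hc1
      exact Or.inr (Or.inl ⟨htriple, hTsub, by rw [← hc1]; exact inter_subset_left⟩)
    · have hTH : ¬ M1.E ∩ M2.E ⊆ H := by
        intro hTH
        have hFE1 : (M1.E ∪ (H ∩ M2.E)) ∩ M1.E = M1.E := inter_eq_right.mpr subset_union_left
        have hFE2 : (M1.E ∪ (H ∩ M2.E)) ∩ M2.E = H ∩ M2.E := by
          apply subset_antisymm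
          · rintro x ⟨hx, hxE⟩
            rcases hx with h | h
            · exact ⟨hTH ⟨h, hxE⟩, hxE⟩
            · exact h
          · exact fun x hx => ⟨Or.inr hx, hx.2⟩
        have hFflat : M.IsFlat (M1.E ∪ (H ∩ M2.E)) := by
          rw [hMF]
          refine ⟨union_subset subset_union_left
            (inter_subset_right.trans subset_union_right), ?_, ?_⟩
          · rw [hFE1]; exact M1.ground_isFlat
          · rw [hFE2]; exact hH2f
        have hHF : H ⊆ M1.E ∪ (H ∩ M2.E) := by
          intro x hx
          rcases hHsub hx with h | h
          · exact Or.inl h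
          · exact Or.inr ⟨hx, h⟩
        rcases hmax _ hFflat hHF with h | h
        · rw [h] at hFE1
          exact hc1 hFE1
        · apply hc2
          rw [h, hME] at hFE2
          rw [← hFE2]
          exact inter_eq_right.mpr subset_union_right
      have max1 : ∀ G, M1.IsFlat G → H ∩ M1.E ⊆ G → G = H ∩ M1.E ∨ G = M1.E :=
        fun G hG hHG =>
          key_lemma M1 M2 M _ rfl hres hmod1 hmod2 hME hMF hHf hmax hTH hG hHG
      have max2 : ∀ G, M2.IsFlat G → H ∩ M2.E ⊆ G → G = H ∩ M2.E ∨ G = M2.E :=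
        fun G hG hHG =>
          key_lemma M2 M1 M (M1.E ∩ M2.E) (inter_comm M1.E M2.E) hres.symm hmod2 hmod1
            hME' hMF' hHf hmax hTH hG hHG
      exact Or.inr (Or.inr ⟨⟨hH1f, hc1, max1⟩, ⟨hH2f, hc2, max2⟩, hTH⟩)
  · rintro (⟨⟨f1, ne1, max1⟩, _, hE2H⟩ | ⟨⟨f2, ne2, max2⟩, _, hE1H⟩ |
      ⟨⟨f1, ne1, max1⟩, ⟨f2, ne2, max2⟩, hTH⟩)
    · exact rev1_lemma M1 M2 M hME hMF hHsub f1 ne1 max1 hE2H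
    · have hHsub' : H ⊆ M2.E ∪ M1.E := by rw [union_comm]; exact hHsub
      exact rev1_lemma M2 M1 M hME' hMF' hHsub' f2 ne2 max2 hE1H
    · exact rev3_lemma M1 M2 M _ rfl hME hMF hHsub f1 ne1 max1 f2 ne2 max2 hTH
end

section
/- Let M1 and M2 be matroids on E1 and E2 with X = E1 ∩ E2, such that M1|X = M2|X, X is a modular flat of M2, and M2|X is isomorphic to U_{2,n} for some n ≥ 2. A subset F ⊆ E1 ∪ E2 is a corank-2 flat of P_X(M1,M2) if and only if: (1) E1 ⊆ F and F ∩ E2 is a corank-2 flat of M2 containing X; or (2) E2 ⊆ F and F ∩ E1 is a corank-2 flat of M1 containing X; or (3) for each i = 1,2, F ∩ E_i is a hyperplane of M_i containing X; or (4) |F ∩ X| = 1, F ∩ E1 is a hyperplane of M1, and F ∩ E2 is a corank-2 flat of M2; or (5) |F ∩ X| = 1, F ∩ E1 is a corank-2 flat of M1, and F ∩ E2 is a hyperplane of M2; or (6) F ∩ X = ∅, F ∩ E1 is a hyperplane of M1, and F ∩ E2 is a corank-3 flat of M2; or (7) F ∩ X = ∅ and F ∩ E_i is a corank-2 flat of M_i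 for i = 1,2. -/
open Matroid Set

variable {α : Type*}

set_option linter.unusedSectionVars false

section Aux


section RankBasics

variable {N : Matroid α} [N.Finite] {I J S T F G : Set α} {e : α}

lemma mRk_bddAbove (N : Matroid α) [N.Finite] (S : Set α) :
    BddAbove {n : ℕ | ∃ I, N.Indep I ∧ I ⊆ S ∧ I.ncard = n} := by
  refine ⟨N.E.ncard, fun n hn => ?_⟩
  obtain ⟨I, hI, -, rfl⟩ := hn
  exact ncard_le_ncard hI.subset_ground N.ground_finite

lemma ncard_le_mRk_s6 (hJ : N.Indep J) (hJS : J ⊆ S) : J.ncard ≤ mRk N S :=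
  le_csSup (mRk_bddAbove N S) ⟨J, hJ, hJS, rfl⟩

lemma mRk_le_of (k : ℕ) (h : ∀ J, N.Indep J → J ⊆ S → J.ncard ≤ k) : mRk N S ≤ k := by
  refine csSup_le ⟨0, ∅, N.empty_indep, empty_subset _, ncard_empty _⟩ ?_
  rintro n ⟨J, hJ, hJS, rfl⟩
  exact h J hJ hJS

lemma mRk_basis' (h : N.IsBasis' I S) : mRk N S = I.ncard := by
  refine le_antisymm (mRk_le_of _ fun J hJ hJS => ?_) (ncard_le_mRk_s6 h.indep h.subset)
  obtain ⟨J', hJ', hJJ'⟩ := hJ.subset_isBasis'_of_subset hJS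
  have hIf : I.Finite := N.set_finite I h.indep.subset_ground
  have hJf : J'.Finite := N.set_finite J' hJ'.indep.subset_ground
  have := h.encard_eq_encard hJ'
  have hcard : J'.ncard = I.ncard := by
    rw [ncard_def, ncard_def, this]
  calc J.ncard ≤ J'.ncard := ncard_le_ncard hJJ' hJf
    _ = I.ncard := hcard

lemma mRk_basis (h : N.IsBasis I S) : mRk N S = I.ncard := mRk_basis' h.isBasis'

lemma mRk_mono_s6 (h : S ⊆ T) : mRk N S ≤ mRk N T := by
  obtain ⟨I, hI⟩ := N.exists_isBasis' S
  rw [mRk_basis' hI]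
  exact ncard_le_mRk_s6 hI.indep (hI.subset.trans h)

lemma mRk_closure_eq_s6 (S : Set α) : mRk N (N.closure S) = mRk N S := by
  obtain ⟨I, hI⟩ := N.exists_isBasis' S
  rw [mRk_basis' hI, mRk_basis hI.isBasis_closure_right]

lemma mRk_insert_le (e : α) (S : Set α) : mRk N (insert e S) ≤ mRk N S + 1 := by
  refine mRk_le_of _ fun J hJ hJS => ?_
  have h1 : J \ {e} ⊆ S := by
    intro a ha
    rcases hJS ha.1 with h | h
    · exact absurd h ha.2
    · exact h
  have h2 : (J \ {e}).ncard ≤ mRk N S := ncard_le_mRk_s6 (hJ.subset diff_subset) h1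
  have hJf : J.Finite := N.set_finite J hJ.subset_ground
  rcases em (e ∈ J) with he | he
  · rw [← ncard_diff_singleton_add_one he hJf]
    omega
  · rw [diff_singleton_eq_self he] at h1 h2
    omega

lemma mRk_empty (N : Matroid α) [N.Finite] : mRk N (∅ : Set α) = 0 := by
  refine le_antisymm (mRk_le_of _ fun J hJ hJS => ?_) (Nat.zero_le _)
  rw [subset_empty_iff.1 hJS, ncard_empty]

lemma mRk_flat_ssubset (hF : N.IsFlat F) (hG : N.IsFlat G) (hFG : F ⊆ G) (hne : F ≠ G) :
    mRk N F + 1 ≤ mRk N G := by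
  obtain ⟨I, hI⟩ := N.exists_isBasis F hF.subset_ground
  obtain ⟨J, hJ, hIJ⟩ := hI.indep.subset_isBasis_of_subset (hI.subset.trans hFG) hG.subset_ground
  rw [mRk_basis hI, mRk_basis hJ]
  have hJf : J.Finite := N.set_finite J hJ.indep.subset_ground
  by_contra hcon
  push_neg at hcon
  have hIJ' : I = J := Set.eq_of_subset_of_ncard_le hIJ (by omega) hJf
  apply hne
  refine subset_antisymm hFG ?_
  have h1 : G ⊆ N.closure J := hJ.subset_closure
  rw [← hIJ'] at h1
  refine h1.trans ?_
  have : N.closure I ⊆ N.closure F := N.closure_subset_closure hI.subset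
  rw [hF.closure] at this
  exact this

lemma flat_eq_of_mRk_le (hF : N.IsFlat F) (hG : N.IsFlat G) (hFG : F ⊆ G) (h : mRk N G ≤ mRk N F) :
    F = G := by
  by_contra hne
  have := mRk_flat_ssubset hF hG hFG hne
  omega

lemma flat_closure_s6 (N : Matroid α) (S : Set α) : N.IsFlat (N.closure S) := by
  rw [closure_def]
  have hne : Nonempty {F // N.IsFlat F ∧ S ∩ N.E ⊆ F} := ⟨⟨N.E, N.ground_isFlat, inter_subset_right⟩⟩
  have h := Matroid.IsFlat.iInter (M := N)
    (Fs := fun F : {F // N.IsFlat F ∧ S ∩ N.E ⊆ F} => F.1) (fun F => F.2.1)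
  convert h using 1
  rw [sInter_eq_iInter]
  apply iInter_congr_of_surjective (fun F : {F // N.IsFlat F ∧ S ∩ N.E ⊆ F} =>
    (⟨F.1, F.2⟩ : ↥{F | N.IsFlat F ∧ S ∩ N.E ⊆ F}))
  · rintro ⟨F, hF⟩; exact ⟨⟨F, hF⟩, rfl⟩
  · intro F; rfl

lemma mRk_le_mRank (S : Set α) (hS : S ⊆ N.E) : mRk N S ≤ mRank N := mRk_mono_s6 hS

lemma flat_closure_insert_rank (hF : N.IsFlat F) (he : e ∈ N.E) (heF : e ∉ F) :
    mRk N (N.closure (insert e F)) = mRk N F + 1 := by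
  rw [mRk_closure_eq_s6]
  refine le_antisymm (mRk_insert_le e F) ?_
  have h1 : F ⊆ N.closure (insert e F) := by
    refine (subset_insert e F).trans (N.subset_closure _ ?_)
    exact insert_subset he hF.subset_ground
  have h2 := mRk_flat_ssubset hF (flat_closure_s6 N (insert e F)) h1 ?_
  · rw [mRk_closure_eq_s6] at h2
    exact h2
  · intro hcon
    apply heF
    rw [hcon]
    exact N.subset_closure _ (insert_subset he hF.subset_ground) (mem_insert e F)

end RankBasics

section Extra

variable {N : Matroid α} [N.Finite] {F S X : Set α} {e : α}

lemma exists_not_mem_closure (h : mRk N S < mRank N) : ∃ e ∈ N.E, e ∉ N.closure S := by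
  by_contra hcon
  push_neg at hcon
  have h1 : mRank N ≤ mRk N (N.closure S) := mRk_mono_s6 hcon
  rw [mRk_closure_eq_s6] at h1
  omega

omit [N.Finite] in
lemma closure_insert_inter_subset (hF : N.IsFlat F) (he : e ∉ N.closure (F ∪ X)) :
    N.closure (insert e F) ∩ X ⊆ F := by
  intro x hx
  by_contra hxF
  have hx1 : x ∈ N.closure (insert e F) \ N.closure F := by
    rw [hF.closure]
    exact ⟨hx.1, hxF⟩
  have hx2 := Matroid.closure_exchange hx1
  apply he
  exact N.closure_subset_closure (insert_subset_iff.2 ⟨Or.inr hx.2, subset_union_left⟩) hx2.1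

end Extra

end Aux

/-- Corank-2 flats of the generalized parallel connection `P_X(M1, M2)`
when `X = E1 ∩ E2` is a modular flat of `M2` with `M2|X ≅ U_{2,n}`, `n ≥ 2`. -/
theorem gpc_corank2_flats_rank_two (M1 M2 M : Matroid α) [M1.Finite] [M2.Finite]
    (E1 E2 X : Set α) (n : ℕ) (hn : 2 ≤ n)
    (hE1 : M1.E = E1) (hE2 : M2.E = E2) (hX : X = E1 ∩ E2)
    (hres : M1 ↾ X = M2 ↾ X) (hmod : IsModFlat M2 X)
    (hU : RestrIsU2 M2 X n)
    (hM : IsGPC M1 M2 M) :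
    ∀ F ⊆ E1 ∪ E2, (IsCr2Flat M F ↔
      (E1 ⊆ F ∧ IsCr2Flat M2 (F ∩ E2) ∧ X ⊆ F ∩ E2) ∨
      (E2 ⊆ F ∧ IsCr2Flat M1 (F ∩ E1) ∧ X ⊆ F ∩ E1) ∨
      (IsHyp M1 (F ∩ E1) ∧ X ⊆ F ∩ E1 ∧ IsHyp M2 (F ∩ E2) ∧ X ⊆ F ∩ E2) ∨
      ((F ∩ X).ncard = 1 ∧ IsHyp M1 (F ∩ E1) ∧ IsCr2Flat M2 (F ∩ E2)) ∨
      ((F ∩ X).ncard = 1 ∧ IsCr2Flat M1 (F ∩ E1) ∧ IsHyp M2 (F ∩ E2)) ∨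
      (F ∩ X = ∅ ∧ IsHyp M1 (F ∩ E1) ∧ IsCr3Flat M2 (F ∩ E2)) ∨
      (F ∩ X = ∅ ∧ IsCr2Flat M1 (F ∩ E1) ∧ IsCr2Flat M2 (F ∩ E2))) := by
    classical
  -- basic set facts
  have hXE1 : X ⊆ E1 := hX ▸ inter_subset_left
  have hXE2 : X ⊆ E2 := hX ▸ inter_subset_right
  obtain ⟨hXg, hXcard, hXind⟩ := hU
  have hXfin : X.Finite := M2.set_finite X hXg
  have hXg1 : X ⊆ M1.E := hE1 ▸ hXE1
  have hEM : M.E = E1 ∪ E2 := by rw [hM.1, hE1, hE2]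
  haveI hMfin : M.Finite :=
    ⟨by rw [hM.1, hE1, hE2]; exact (hE1 ▸ M1.ground_finite).union (hE2 ▸ M2.ground_finite)⟩
  have hflat : ∀ F : Set α, M.IsFlat F ↔ (F ⊆ E1 ∪ E2 ∧ M1.IsFlat (F ∩ E1) ∧ M2.IsFlat (F ∩ E2)) := by
    intro F; rw [(hM.2 F), hE1, hE2]
  have hE1X : ∀ S : Set α, S ∩ E1 ∩ X = S ∩ X := fun S => by
    rw [inter_assoc, inter_eq_self_of_subset_right hXE1]
  have hE2X : ∀ S : Set α, S ∩ E2 ∩ X = S ∩ X := fun S => by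
    rw [inter_assoc, inter_eq_self_of_subset_right hXE2]
  -- independence in X
  have hind1 : ∀ S ⊆ X, (M1.Indep S ↔ S.ncard ≤ 2) := by
    intro S hS
    have h1 : (M1 ↾ X).Indep S ↔ (M2 ↾ X).Indep S := by rw [hres]
    rw [restrict_indep_iff, restrict_indep_iff] at h1
    rw [← hXind S hS]
    exact ⟨fun h => (h1.1 ⟨h, hS⟩).1, fun h => (h1.2 ⟨h, hS⟩).1⟩
  have hpair : ∃ x ∈ X, ∃ y ∈ X, x ≠ y := by
    have h1 : 1 < X.ncard := by omega
    obtain ⟨a, b, ha, hb, hab⟩ := (Set.one_lt_ncard_iff hXfin).1 h1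
    exact ⟨a, ha, b, hb, hab⟩
  -- span facts
  have hspan : ∀ N : Matroid α, (∀ S ⊆ X, (N.Indep S ↔ S.ncard ≤ 2)) → X ⊆ N.E →
      ∀ x ∈ X, ∀ y ∈ X, x ≠ y → X ⊆ N.closure {x, y} := by
    intro N hNind hNX x hx y hy hxy z hz
    have hpsub : ({x, y} : Set α) ⊆ X := by
      intro a ha; rcases ha with rfl | rfl; exacts [hx, hy]
    by_cases hzxy : z ∈ ({x, y} : Set α)
    · exact N.subset_closure {x, y} (hpsub.trans hNX) hzxy
    · have hxyind : N.Indep {x, y} := (hNind {x, y} hpsub).2 (by rw [ncard_pair hxy])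
      rw [hxyind.mem_closure_iff]
      left
      rw [dep_iff]
      refine ⟨fun hcon => ?_, insert_subset (hNX hz) (hpsub.trans hNX)⟩
      have h3 := (hNind _ (insert_subset hz hpsub)).1 hcon
      rw [ncard_insert_of_notMem hzxy (by exact (Set.finite_singleton y).insert x),
        ncard_pair hxy] at h3
      omega
  have hspan1 : ∀ x ∈ X, ∀ y ∈ X, x ≠ y → X ⊆ M1.closure {x, y} := hspan M1 hind1 hXg1
  have hspan2 : ∀ x ∈ X, ∀ y ∈ X, x ≠ y → X ⊆ M2.closure {x, y} := hspan M2 hXind hXg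
  -- rank of X and singletons
  have hXrk : mRk M2 X = 2 := by
    obtain ⟨x, hx, y, hy, hxy⟩ := hpair
    refine le_antisymm (mRk_le_of _ fun J hJ hJX => (hXind J hJX).1 hJ) ?_
    have hpsub : ({x, y} : Set α) ⊆ X := by
      intro a ha; rcases ha with rfl | rfl; exacts [hx, hy]
    have hi : M2.Indep {x, y} := (hXind _ hpsub).2 (by rw [ncard_pair hxy])
    have h2 := ncard_le_mRk_s6 hi hpsub
    rwa [ncard_pair hxy] at h2
  have hsing2 : ∀ x ∈ X, mRk M2 {x} = 1 := by
    intro x hx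
    refine le_antisymm (mRk_le_of _ fun J hJ hJx => ?_) ?_
    · exact (ncard_le_ncard hJx (finite_singleton x)).trans (by simp)
    · have hi : M2.Indep {x} := (hXind _ (singleton_subset_iff.2 hx)).2 (by simp)
      have h2 := ncard_le_mRk_s6 hi Subset.rfl
      simpa using h2
  -- trichotomy for flats of M
  have htri : ∀ F : Set α, M.IsFlat F →
      (F ∩ X = ∅) ∨ (∃ x ∈ X, F ∩ X = {x}) ∨ (X ⊆ F ∧ F ∩ X = X) := by
    intro F hF
    obtain ⟨hFE, hF1, hF2⟩ := (hflat F).1 hF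
    rcases (F ∩ X).eq_empty_or_nonempty with h | ⟨x, hx⟩
    · exact Or.inl h
    by_cases h2 : ∃ y ∈ F ∩ X, y ≠ x
    · obtain ⟨y, hy, hyx⟩ := h2
      right; right
      have hsub : X ⊆ F ∩ E2 := by
        intro z hz
        have h3 : z ∈ M2.closure {y, x} := hspan2 y hy.2 x hx.2 hyx hz
        have h5 : ({y, x} : Set α) ⊆ F ∩ E2 := by
          intro a ha; rcases ha with rfl | rfl
          exacts [⟨hy.1, hXE2 hy.2⟩, ⟨hx.1, hXE2 hx.2⟩]
        have h4 := M2.closure_subset_closure h5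
        rw [hF2.closure] at h4
        exact h4 h3
      have hXF : X ⊆ F := hsub.trans inter_subset_left
      exact ⟨hXF, inter_eq_self_of_subset_right hXF⟩
    · push_neg at h2
      right; left
      refine ⟨x, hx.2, subset_antisymm (fun y hy => h2 y hy) (singleton_subset_iff.2 hx)⟩
  -- modularity consequences
  have hmeet0 : ∀ F2 : Set α, M2.IsFlat F2 → F2 ∩ X = ∅ →
      mRk M2 (F2 ∪ X) = mRk M2 F2 + 2 := by
    intro F2 hF2 hFX
    have h := hmod.2 F2 hF2
    rw [inter_comm] at hFX
    rw [hFX, mRk_empty, hXrk, union_comm] at h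
    omega
  have hmeet : ∀ F2 : Set α, M2.IsFlat F2 → F2 ∩ X = ∅ → mRk M2 F2 + 2 ≤ mRank M2 := by
    intro F2 hF2 hFX
    have h := hmeet0 F2 hF2 hFX
    have h2 : mRk M2 (F2 ∪ X) ≤ mRank M2 :=
      mRk_le_mRank _ (union_subset hF2.subset_ground hXg)
    omega
  have hmeet1 : ∀ (F2 : Set α) (x : α), M2.IsFlat F2 → F2 ∩ X = {x} → x ∈ X →
      mRk M2 (F2 ∪ X) = mRk M2 F2 + 1 := by
    intro F2 x hF2 hFX hx
    have h := hmod.2 F2 hF2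
    rw [inter_comm] at hFX
    rw [hFX, hsing2 x hx, hXrk, union_comm] at h
    omega
  -- span bounds in M1
  have hFX2' : ∀ F1 : Set α, M1.IsFlat F1 → mRk M1 (F1 ∪ X) ≤ mRk M1 F1 + 2 := by
    intro F1 hF1
    obtain ⟨x, hx, y, hy, hxy⟩ := hpair
    have hins : insert x (insert y F1) ⊆ M1.E :=
      insert_subset (hXg1 hx) (insert_subset (hXg1 hy) hF1.subset_ground)
    have hsub : F1 ∪ X ⊆ M1.closure (insert x (insert y F1)) := by
      refine union_subset ?_ ?_
      · exact ((subset_insert y F1).trans (subset_insert x _)).trans (M1.subset_closure _ hins)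
      · intro z hz
        refine M1.closure_subset_closure ?_ (hspan1 x hx y hy hxy hz)
        intro a ha; rcases ha with rfl | rfl
        exacts [mem_insert a _, mem_insert_of_mem _ (mem_insert a _)]
    have h1 := mRk_mono_s6 (N := M1) hsub
    rw [mRk_closure_eq_s6] at h1
    have h2 := mRk_insert_le (N := M1) x (insert y F1)
    have h3 := mRk_insert_le (N := M1) y F1
    omega
  have hFX1' : ∀ (F1 : Set α) (x : α), M1.IsFlat F1 → x ∈ F1 → x ∈ X →
      mRk M1 (F1 ∪ X) ≤ mRk M1 F1 + 1 := by
    intro F1 x hF1 hxF hxX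
    obtain ⟨y, hy, hyx⟩ := Set.exists_ne_of_one_lt_ncard (s := X) (by omega) x
    have hins : insert y F1 ⊆ M1.E := insert_subset (hXg1 hy) hF1.subset_ground
    have hsub : F1 ∪ X ⊆ M1.closure (insert y F1) := by
      refine union_subset ((subset_insert y F1).trans (M1.subset_closure _ hins)) ?_
      intro z hz
      refine M1.closure_subset_closure ?_ (hspan1 x hxX y hy (Ne.symm hyx) hz)
      intro a ha; rcases ha with rfl | rfl
      exacts [mem_insert_of_mem _ hxF, mem_insert a _]
    have h1 := mRk_mono_s6 (N := M1) hsub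
    rw [mRk_closure_eq_s6] at h1
    have h2 := mRk_insert_le (N := M1) y F1
    omega
    -- full rank flats
  have hR1E : mRk M1 E1 = mRank M1 := by rw [← hE1]; rfl
  have hR2E : mRk M2 E2 = mRank M2 := by rw [← hE2]; rfl
  have hflatE1 : M1.IsFlat E1 := hE1 ▸ M1.ground_isFlat
  have hflatE2 : M2.IsFlat E2 := hE2 ▸ M2.ground_isFlat
  have hb1 : ∀ F1 : Set α, M1.IsFlat F1 → mRk M1 F1 ≤ mRank M1 :=
    fun F1 hF1 => mRk_le_mRank _ hF1.subset_ground
  have hb2 : ∀ F2 : Set α, M2.IsFlat F2 → mRk M2 F2 ≤ mRank M2 :=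
    fun F2 hF2 => mRk_le_mRank _ hF2.subset_ground
  have hfull1 : ∀ F1 : Set α, M1.IsFlat F1 → mRank M1 ≤ mRk M1 F1 → F1 = E1 := by
    intro F1 hF1 h
    exact flat_eq_of_mRk_le hF1 hflatE1 (hE1 ▸ hF1.subset_ground) (by rw [hR1E]; exact h)
  have hfull2 : ∀ F2 : Set α, M2.IsFlat F2 → mRank M2 ≤ mRk M2 F2 → F2 = E2 := by
    intro F2 hF2 h
    exact flat_eq_of_mRk_le hF2 hflatE2 (hE2 ▸ hF2.subset_ground) (by rw [hR2E]; exact h)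
  -- the corank weight function
  have hw : ∀ F : Set α, True := fun _ => trivial
  set w : Set α → ℕ := fun F =>
    (mRank M1 - mRk M1 (F ∩ E1)) + (mRank M2 - mRk M2 (F ∩ E2)) + mRk M2 (F ∩ X)
    with hwdef
  have hw : ∀ F : Set α, w F =
      (mRank M1 - mRk M1 (F ∩ E1)) + (mRank M2 - mRk M2 (F ∩ E2)) + mRk M2 (F ∩ X) :=
    fun F => rfl
  have hd1pos : ∀ F : Set α, M.IsFlat F → F ∩ X ≠ X → mRk M1 (F ∩ E1) + 1 ≤ mRank M1 := by
    intro F hF hne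
    obtain ⟨-, hF1, -⟩ := (hflat F).1 hF
    by_contra h
    push_neg at h
    have h2 := hfull1 _ hF1 (by omega)
    have hXF : X ⊆ F := by
      intro z hz
      have h3 : z ∈ F ∩ E1 := by rw [h2]; exact hXE1 hz
      exact h3.1
    exact hne (inter_eq_self_of_subset_right hXF)
  have hd2pos : ∀ F : Set α, M.IsFlat F → F ∩ X ≠ X → mRk M2 (F ∩ E2) + 1 ≤ mRank M2 := by
    intro F hF hne
    obtain ⟨-, -, hF2⟩ := (hflat F).1 hF
    by_contra h
    push_neg at h
    have h2 := hfull2 _ hF2 (by omega)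
    have hXF : X ⊆ F := by
      intro z hz
      have h3 : z ∈ F ∩ E2 := by rw [h2]; exact hXE2 hz
      exact h3.1
    exact hne (inter_eq_self_of_subset_right hXF)
  -- the decrease lemma
  have hdec : ∀ F G : Set α, M.IsFlat F → M.IsFlat G → F ⊆ G → F ≠ G → w G + 1 ≤ w F := by
    intro F G hF hG hFG hne
    obtain ⟨hFE, hF1, hF2⟩ := (hflat F).1 hF
    obtain ⟨hGE, hG1, hG2⟩ := (hflat G).1 hG
    have hsub1 : F ∩ E1 ⊆ G ∩ E1 := inter_subset_inter_left _ hFG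
    have hsub2 : F ∩ E2 ⊆ G ∩ E2 := inter_subset_inter_left _ hFG
    have h11 : mRk M1 (F ∩ E1) ≤ mRk M1 (G ∩ E1) := mRk_mono_s6 hsub1
    have h22 : mRk M2 (F ∩ E2) ≤ mRk M2 (G ∩ E2) := mRk_mono_s6 hsub2
    have hbG1 := hb1 _ hG1
    have hbG2 := hb2 _ hG2
    have hstrict1 : ∀ z, z ∈ G → z ∉ F → z ∈ E1 →
        mRk M1 (F ∩ E1) + 1 ≤ mRk M1 (G ∩ E1) := by
      intro z h1 h2 h3
      refine mRk_flat_ssubset hF1 hG1 hsub1 (fun hcon => h2 ?_)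
      have h4 : z ∈ G ∩ E1 := ⟨h1, h3⟩
      rw [← hcon] at h4
      exact h4.1
    have hstrict2 : ∀ z, z ∈ G → z ∉ F → z ∈ E2 →
        mRk M2 (F ∩ E2) + 1 ≤ mRk M2 (G ∩ E2) := by
      intro z h1 h2 h3
      refine mRk_flat_ssubset hF2 hG2 hsub2 (fun hcon => h2 ?_)
      have h4 : z ∈ G ∩ E2 := ⟨h1, h3⟩
      rw [← hcon] at h4
      exact h4.1
    have hstep : mRk M1 (F ∩ E1) + 1 ≤ mRk M1 (G ∩ E1) ∨
        mRk M2 (F ∩ E2) + 1 ≤ mRk M2 (G ∩ E2) := by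
      obtain ⟨e, heG, heF⟩ := Set.not_subset.1 (fun h => hne (subset_antisymm hFG h))
      rcases hGE heG with he1 | he2
      · exact Or.inl (hstrict1 e heG heF he1)
      · exact Or.inr (hstrict2 e heG heF he2)
    rcases htri F hF with hF0 | ⟨x, hxX, hxeq⟩ | ⟨hXF, hXeq⟩
    · rcases htri G hG with hG0 | ⟨y, hyX, hyeq⟩ | ⟨hXG, hYeq⟩
      · simp only [hw, hF0, hG0, mRk_empty]
        rcases hstep with h | h <;> omega
      · have hyG : y ∈ G ∩ X := by rw [hyeq]; exact mem_singleton y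
        have hyF : y ∉ F := fun h => by
          have h5 : y ∈ F ∩ X := ⟨h, hyX⟩
          rw [hF0] at h5
          exact absurd h5 (notMem_empty y)
        have s1 := hstrict1 y hyG.1 hyF (hXE1 hyX)
        have s2 := hstrict2 y hyG.1 hyF (hXE2 hyX)
        simp only [hw, hF0, hyeq, mRk_empty, hsing2 y hyX]
        omega
      · have hFE2X : (F ∩ E2) ∩ X = ∅ := by rw [hE2X, hF0]
        have hj := hmeet0 _ hF2 hFE2X
        have hsubX : (F ∩ E2) ∪ X ⊆ G ∩ E2 :=
          union_subset hsub2 (fun z hz => ⟨hXG hz, hXE2 hz⟩)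
        have h2j := mRk_mono_s6 (N := M2) hsubX
        obtain ⟨x, hx, -⟩ := hpair
        have hxF : x ∉ F := fun h => by
          have h5 : x ∈ F ∩ X := ⟨h, hx⟩
          rw [hF0] at h5
          exact absurd h5 (notMem_empty x)
        have s1 := hstrict1 x (hXG hx) hxF (hXE1 hx)
        simp only [hw, hF0, hYeq, mRk_empty, hXrk]
        omega
    · rcases htri G hG with hG0 | ⟨y, hyX, hyeq⟩ | ⟨hXG, hYeq⟩
      · exfalso
        have hxF : x ∈ F ∩ X := by rw [hxeq]; exact mem_singleton x
        have h5 : x ∈ G ∩ X := ⟨hFG hxF.1, hxF.2⟩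
        rw [hG0] at h5
        exact absurd h5 (notMem_empty x)
      · have hxy : x = y := by
          have hxF : x ∈ F ∩ X := by rw [hxeq]; exact mem_singleton x
          have h5 : x ∈ G ∩ X := ⟨hFG hxF.1, hxF.2⟩
          rwa [hyeq, mem_singleton_iff] at h5
        rw [← hxy] at hyeq
        simp only [hw, hxeq, hyeq, hsing2 x hxX]
        rcases hstep with h | h <;> omega
      · have hFE2X : (F ∩ E2) ∩ X = {x} := by rw [hE2X, hxeq]
        have hj := hmeet1 _ x hF2 hFE2X hxX
        have hsubX : (F ∩ E2) ∪ X ⊆ G ∩ E2 :=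
          union_subset hsub2 (fun z hz => ⟨hXG hz, hXE2 hz⟩)
        have h2j := mRk_mono_s6 (N := M2) hsubX
        obtain ⟨y, hy, hyx⟩ := Set.exists_ne_of_one_lt_ncard (s := X) (by omega) x
        have hyF : y ∉ F := fun h => by
          have h5 : y ∈ F ∩ X := ⟨h, hy⟩
          rw [hxeq, mem_singleton_iff] at h5
          exact hyx h5
        have s1 := hstrict1 y (hXG hy) hyF (hXE1 hy)
        simp only [hw, hxeq, hYeq, hsing2 x hxX, hXrk]
        omega
    · have hXG : X ⊆ G := hXF.trans hFG
      have hYeq : G ∩ X = X := inter_eq_self_of_subset_right hXG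
      simp only [hw, hXeq, hYeq, hXrk]
      rcases hstep with h | h <;> omega
    -- the ground set as a flat of M
  have hinterE1 : (E1 ∪ E2) ∩ E1 = E1 := inter_eq_self_of_subset_right subset_union_left
  have hinterE2 : (E1 ∪ E2) ∩ E2 = E2 := inter_eq_self_of_subset_right subset_union_right
  have hinterX : (E1 ∪ E2) ∩ X = X :=
    inter_eq_self_of_subset_right (hXE1.trans subset_union_left)
  have hEflat : M.IsFlat (E1 ∪ E2) := by
    rw [hflat]
    exact ⟨Subset.rfl, by rw [hinterE1]; exact hflatE1, by rw [hinterE2]; exact hflatE2⟩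
  have hMrk : mRk M (E1 ∪ E2) = mRank M := by rw [← hEM]; rfl
  have hwE : w (E1 ∪ E2) = 2 := by
    rw [hw, hinterE1, hinterE2, hinterX, hR1E, hR2E, hXrk]
    omega
  have hwpos : ∀ F : Set α, M.IsFlat F → w F ≠ 0 := by
    intro F hF h0
    rw [hw] at h0
    obtain ⟨-, hF1, -⟩ := (hflat F).1 hF
    have hb := hb1 _ hF1
    have h1 : mRank M1 ≤ mRk M1 (F ∩ E1) := by omega
    have h2 := hfull1 _ hF1 h1
    have hXF : X ⊆ F := by
      intro z hz
      have h3 : z ∈ F ∩ E1 := by rw [h2]; exact hXE1 hz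
      exact h3.1
    rw [inter_eq_self_of_subset_right hXF, hXrk] at h0
    omega
  -- claim A : lower bound on corank
  have hclaimA : ∀ (k : ℕ) (F : Set α), M.IsFlat F → w F ≤ k →
      mRank M + 2 ≤ mRk M F + w F := by
    intro k
    induction k with
    | zero => exact fun F hF hle => absurd (Nat.le_zero.1 hle) (hwpos F hF)
    | succ k ih =>
      intro F hF hle
      by_cases hFE : F = E1 ∪ E2
      · rw [hFE, hMrk, hwE]
      · have hFsub : F ⊆ E1 ∪ E2 := ((hflat F).1 hF).1
        obtain ⟨e, heE, heF⟩ := Set.not_subset.1 (fun h => hFE (subset_antisymm hFsub h))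
        have hins : insert e F ⊆ M.E := by rw [hEM]; exact insert_subset heE hFsub
        have hGflat : M.IsFlat (M.closure (insert e F)) := flat_closure_s6 M _
        have hFG : F ⊆ M.closure (insert e F) :=
          (subset_insert e F).trans (M.subset_closure _ hins)
        have heG : e ∈ M.closure (insert e F) := M.subset_closure _ hins (mem_insert e F)
        have hneFG : F ≠ M.closure (insert e F) := fun h => heF (h ▸ heG)
        have hdrop := hdec F _ hF hGflat hFG hneFG
        have hrk := flat_closure_insert_rank hF (hEM ▸ heE) heF
        have hA := ih _ hGflat (by omega)
        omega
  -- flats with weight two equal the ground set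
  have hw2 : ∀ F : Set α, M.IsFlat F → w F ≤ 2 → F = E1 ∪ E2 := by
    intro F hF hle
    rw [hw] at hle
    obtain ⟨hFsub, hF1, hF2⟩ := (hflat F).1 hF
    have hbF1 := hb1 _ hF1
    have hbF2 := hb2 _ hF2
    rcases htri F hF with hF0 | ⟨x, hxX, hxeq⟩ | ⟨hXF, hXeq⟩
    · exfalso
      have hno : F ∩ X ≠ X := by
        rw [hF0]
        intro h
        obtain ⟨x, hx, -⟩ := hpair
        rw [← h] at hx
        exact absurd hx (notMem_empty x)
      have hp1 := hd1pos F hF hno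
      have hp2 := hmeet _ hF2 (by rw [hE2X, hF0])
      rw [hF0, mRk_empty] at hle
      omega
    · exfalso
      have hno : F ∩ X ≠ X := by
        rw [hxeq]
        intro h
        obtain ⟨y, hy, hyx⟩ := Set.exists_ne_of_one_lt_ncard (s := X) (by omega) x
        rw [← h, mem_singleton_iff] at hy
        exact hyx hy
      have hp1 := hd1pos F hF hno
      have hp2 := hd2pos F hF hno
      rw [hxeq, hsing2 x hxX] at hle
      omega
    · rw [hXeq, hXrk] at hle
      have he1 : F ∩ E1 = E1 := hfull1 _ hF1 (by omega)
      have he2 : F ∩ E2 = E2 := hfull2 _ hF2 (by omega)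
      refine subset_antisymm hFsub (union_subset ?_ ?_)
      · rw [← he1]; exact inter_subset_left
      · rw [← he2]; exact inter_subset_left
    -- building blocks for one-step extensions
  have hbuild1 : ∀ F G1 : Set α, M.IsFlat F → M1.IsFlat G1 → G1 ⊆ E1 → F ∩ E1 ⊆ G1 →
      G1 ∩ X ⊆ F → (M.IsFlat (G1 ∪ F) ∧ (G1 ∪ F) ∩ E1 = G1 ∧
        (G1 ∪ F) ∩ E2 = F ∩ E2 ∧ (G1 ∪ F) ∩ X = F ∩ X) := by
    intro F G1 hF hG1 hG1sub hFG1 hG1X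
    have hFsub : F ⊆ E1 ∪ E2 := ((hflat F).1 hF).1
    have hF2 := ((hflat F).1 hF).2.2
    have hGXsub : G1 ∩ X ⊆ F ∩ X := fun a ha => ⟨hG1X ha, ha.2⟩
    have he1 : (G1 ∪ F) ∩ E1 = G1 := by
      rw [union_inter_distrib_right, inter_eq_self_of_subset_left hG1sub,
        union_eq_left.2 hFG1]
    have hG1E2 : G1 ∩ E2 = G1 ∩ X := by
      rw [hX, ← inter_assoc, inter_eq_self_of_subset_left hG1sub]
    have he2 : (G1 ∪ F) ∩ E2 = F ∩ E2 := by
      rw [union_inter_distrib_right, hG1E2]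
      exact union_eq_right.2 (hGXsub.trans (inter_subset_inter_right _ hXE2))
    have heX : (G1 ∪ F) ∩ X = F ∩ X := by
      rw [union_inter_distrib_right]
      exact union_eq_right.2 hGXsub
    refine ⟨?_, he1, he2, heX⟩
    rw [hflat]
    exact ⟨union_subset (hG1sub.trans subset_union_left) hFsub,
      by rw [he1]; exact hG1, by rw [he2]; exact hF2⟩
  have hbuild2 : ∀ F G2 : Set α, M.IsFlat F → M2.IsFlat G2 → G2 ⊆ E2 → F ∩ E2 ⊆ G2 →
      G2 ∩ X ⊆ F → (M.IsFlat (G2 ∪ F) ∧ (G2 ∪ F) ∩ E1 = F ∩ E1 ∧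
        (G2 ∪ F) ∩ E2 = G2 ∧ (G2 ∪ F) ∩ X = F ∩ X) := by
    intro F G2 hF hG2 hG2sub hFG2 hG2X
    have hFsub : F ⊆ E1 ∪ E2 := ((hflat F).1 hF).1
    have hF1 := ((hflat F).1 hF).2.1
    have hGXsub : G2 ∩ X ⊆ F ∩ X := fun a ha => ⟨hG2X ha, ha.2⟩
    have he2 : (G2 ∪ F) ∩ E2 = G2 := by
      rw [union_inter_distrib_right, inter_eq_self_of_subset_left hG2sub,
        union_eq_left.2 hFG2]
    have hG2E1 : G2 ∩ E1 = G2 ∩ X := by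
      rw [hX, inter_comm E1 E2, ← inter_assoc, inter_eq_self_of_subset_left hG2sub]
    have he1 : (G2 ∪ F) ∩ E1 = F ∩ E1 := by
      rw [union_inter_distrib_right, hG2E1]
      exact union_eq_right.2 (hGXsub.trans (inter_subset_inter_right _ hXE1))
    have heX : (G2 ∪ F) ∩ X = F ∩ X := by
      rw [union_inter_distrib_right]
      exact union_eq_right.2 hGXsub
    refine ⟨?_, he1, he2, heX⟩
    rw [hflat]
    exact ⟨union_subset (hG2sub.trans subset_union_right) hFsub,
      by rw [he1]; exact hF1, by rw [he2]; exact hG2⟩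
  -- claim B : upper bound on corank
  have hclaimB : ∀ (k : ℕ) (F : Set α), M.IsFlat F → w F ≤ k →
      mRk M F + w F ≤ mRank M + 2 := by
    intro k
    induction k with
    | zero => exact fun F hF hle => absurd (Nat.le_zero.1 hle) (hwpos F hF)
    | succ k ih =>
      intro F hF hle
      by_cases hlek : w F ≤ k
      · exact ih F hF hlek
      by_cases hle2 : w F ≤ 2
      · rw [hw2 F hF hle2, hMrk, hwE]
      push_neg at hle2
      obtain ⟨hFsub, hF1, hF2⟩ := (hflat F).1 hF
      have hstep : ∀ G : Set α, M.IsFlat G → F ⊆ G → F ≠ G → w F ≤ w G + 1 →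
          mRk M F + w F ≤ mRank M + 2 := by
        intro G hG hFG hne hwG
        have h1 := mRk_flat_ssubset hF hG hFG hne
        have h2 := hdec F G hF hG hFG hne
        have h3 := ih G hG (by omega)
        omega
      by_cases hle3 : w F ≤ 3
      · refine hstep (E1 ∪ E2) hEflat hFsub (fun h => ?_) (by rw [hwE]; omega)
        rw [h, hwE] at hle2
        omega
      push_neg at hle3
      have hbF1 := hb1 _ hF1
      have hbF2 := hb2 _ hF2
      by_cases hc1 : mRk M1 ((F ∩ E1) ∪ X) < mRank M1
      · -- raise on the M1 side, keeping the X part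
        obtain ⟨e, heE, hecl⟩ := exists_not_mem_closure (N := M1) hc1
        have he1 : e ∈ E1 := hE1 ▸ heE
        have heF1 : e ∉ F ∩ E1 := fun h =>
          hecl (M1.subset_closure _ (union_subset hF1.subset_ground hXg1) (Or.inl h))
        have hG1flat : M1.IsFlat (M1.closure (insert e (F ∩ E1))) := flat_closure_s6 M1 _
        have hG1rk := flat_closure_insert_rank hF1 heE heF1
        have hG1sub : M1.closure (insert e (F ∩ E1)) ⊆ E1 := hE1 ▸ M1.closure_subset_ground _
        have hFG1 : F ∩ E1 ⊆ M1.closure (insert e (F ∩ E1)) :=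
          (subset_insert _ _).trans
            (M1.subset_closure _ (insert_subset heE hF1.subset_ground))
        have heG1 : e ∈ M1.closure (insert e (F ∩ E1)) :=
          M1.subset_closure _ (insert_subset heE hF1.subset_ground) (mem_insert _ _)
        have hG1X : M1.closure (insert e (F ∩ E1)) ∩ X ⊆ F :=
          (closure_insert_inter_subset hF1 hecl).trans inter_subset_left
        obtain ⟨hGf, hg1, hg2, hgX⟩ := hbuild1 F _ hF hG1flat hG1sub hFG1 hG1X
        have hbG1 := hb1 _ hG1flat
        refine hstep _ hGf subset_union_right (fun h => heF1 ⟨by rw [h]; exact Or.inl heG1, he1⟩) ?_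
        rw [hw, hw, hg1, hg2, hgX, hG1rk]
        omega
      by_cases hc2 : mRk M2 ((F ∩ E2) ∪ X) < mRank M2
      · -- raise on the M2 side, keeping the X part
        obtain ⟨e, heE, hecl⟩ := exists_not_mem_closure (N := M2) hc2
        have he2 : e ∈ E2 := hE2 ▸ heE
        have heF2 : e ∉ F ∩ E2 := fun h =>
          hecl (M2.subset_closure _ (union_subset hF2.subset_ground hXg) (Or.inl h))
        have hG2flat : M2.IsFlat (M2.closure (insert e (F ∩ E2))) := flat_closure_s6 M2 _
        have hG2rk := flat_closure_insert_rank hF2 heE heF2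
        have hG2sub : M2.closure (insert e (F ∩ E2)) ⊆ E2 := hE2 ▸ M2.closure_subset_ground _
        have hFG2 : F ∩ E2 ⊆ M2.closure (insert e (F ∩ E2)) :=
          (subset_insert _ _).trans
            (M2.subset_closure _ (insert_subset heE hF2.subset_ground))
        have heG2 : e ∈ M2.closure (insert e (F ∩ E2)) :=
          M2.subset_closure _ (insert_subset heE hF2.subset_ground) (mem_insert _ _)
        have hG2X : M2.closure (insert e (F ∩ E2)) ∩ X ⊆ F :=
          (closure_insert_inter_subset hF2 hecl).trans inter_subset_left
        obtain ⟨hGf, hg1, hg2, hgX⟩ := hbuild2 F _ hF hG2flat hG2sub hFG2 hG2X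
        have hbG2 := hb2 _ hG2flat
        refine hstep _ hGf subset_union_right (fun h => heF2 ⟨by rw [h]; exact Or.inl heG2, he2⟩) ?_
        rw [hw, hw, hg1, hg2, hgX, hG2rk]
        omega
      -- boundary case: both E1 and E2 are spanned by F together with X
      push_neg at hc1 hc2
      rcases htri F hF with hF0 | ⟨x, hxX, hxeq⟩ | ⟨hXF, hXeq⟩
      · -- F ∩ X = ∅, d1 = d2 = 2 : move up inside X
        have hFE2X : (F ∩ E2) ∩ X = ∅ := by rw [hE2X, hF0]
        have hr1 := hFX2' _ hF1
        have hr2 := hmeet0 _ hF2 hFE2X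
        have hwFex : 3 < (mRank M1 - mRk M1 (F ∩ E1)) + (mRank M2 - mRk M2 (F ∩ E2)) +
            mRk M2 (F ∩ X) := by rw [← hw]; exact hle3
        rw [hF0, mRk_empty] at hwFex
        obtain ⟨x, hxX, -⟩ := hpair
        have hxF : x ∉ F := fun h => by
          have h5 : x ∈ F ∩ X := ⟨h, hxX⟩
          rw [hF0] at h5
          exact absurd h5 (notMem_empty x)
        have hxF1 : x ∉ F ∩ E1 := fun h => hxF h.1
        have hxF2 : x ∉ F ∩ E2 := fun h => hxF h.1
        have hG1flat : M1.IsFlat (M1.closure (insert x (F ∩ E1))) := flat_closure_s6 M1 _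
        have hG2flat : M2.IsFlat (M2.closure (insert x (F ∩ E2))) := flat_closure_s6 M2 _
        have hG1rk := flat_closure_insert_rank hF1 (hXg1 hxX) hxF1
        have hG2rk := flat_closure_insert_rank hF2 (hXg hxX) hxF2
        have hG1sub : M1.closure (insert x (F ∩ E1)) ⊆ E1 := hE1 ▸ M1.closure_subset_ground _
        have hG2sub : M2.closure (insert x (F ∩ E2)) ⊆ E2 := hE2 ▸ M2.closure_subset_ground _
        have hFG1 : F ∩ E1 ⊆ M1.closure (insert x (F ∩ E1)) :=
          (subset_insert _ _).trans
            (M1.subset_closure _ (insert_subset (hXg1 hxX) hF1.subset_ground))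
        have hFG2 : F ∩ E2 ⊆ M2.closure (insert x (F ∩ E2)) :=
          (subset_insert _ _).trans
            (M2.subset_closure _ (insert_subset (hXg hxX) hF2.subset_ground))
        have hxG1 : x ∈ M1.closure (insert x (F ∩ E1)) :=
          M1.subset_closure _ (insert_subset (hXg1 hxX) hF1.subset_ground) (mem_insert _ _)
        have hxG2 : x ∈ M2.closure (insert x (F ∩ E2)) :=
          M2.subset_closure _ (insert_subset (hXg hxX) hF2.subset_ground) (mem_insert _ _)
        have hG1X : M1.closure (insert x (F ∩ E1)) ∩ X = {x} := by
          refine subset_antisymm ?_ (singleton_subset_iff.2 ⟨hxG1, hxX⟩)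
          intro y hy
          rw [mem_singleton_iff]
          by_contra hyx
          have hXG1 : X ⊆ M1.closure (insert x (F ∩ E1)) := by
            intro z hz
            have h1 : z ∈ M1.closure {x, y} := hspan1 x hxX y hy.2 (fun h => hyx h.symm) hz
            have h2 : ({x, y} : Set α) ⊆ M1.closure (insert x (F ∩ E1)) := by
              intro a ha; rcases ha with rfl | rfl; exacts [hxG1, hy.1]
            have h3 := M1.closure_subset_closure h2
            rw [hG1flat.closure] at h3
            exact h3 h1
          have h4 : (F ∩ E1) ∪ X ⊆ M1.closure (insert x (F ∩ E1)) :=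
            union_subset hFG1 hXG1
          have h5 := mRk_mono_s6 (N := M1) h4
          omega
        have hG2X : M2.closure (insert x (F ∩ E2)) ∩ X = {x} := by
          refine subset_antisymm ?_ (singleton_subset_iff.2 ⟨hxG2, hxX⟩)
          intro y hy
          rw [mem_singleton_iff]
          by_contra hyx
          have hXG2 : X ⊆ M2.closure (insert x (F ∩ E2)) := by
            intro z hz
            have h1 : z ∈ M2.closure {x, y} := hspan2 x hxX y hy.2 (fun h => hyx h.symm) hz
            have h2 : ({x, y} : Set α) ⊆ M2.closure (insert x (F ∩ E2)) := by
              intro a ha; rcases ha with rfl | rfl; exacts [hxG2, hy.1]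
            have h3 := M2.closure_subset_closure h2
            rw [hG2flat.closure] at h3
            exact h3 h1
          have h4 : (F ∩ E2) ∪ X ⊆ M2.closure (insert x (F ∩ E2)) :=
            union_subset hFG2 hXG2
          have h5 := mRk_mono_s6 (N := M2) h4
          omega
        set G1 := M1.closure (insert x (F ∩ E1))
        set G2 := M2.closure (insert x (F ∩ E2))
        have hge1 : (G1 ∪ G2) ∩ E1 = G1 := by
          rw [union_inter_distrib_right, inter_eq_self_of_subset_left hG1sub]
          refine union_eq_left.2 ?_
          intro a ha
          have h7 : a ∈ G2 ∩ X := ⟨ha.1, by rw [hX]; exact ⟨ha.2, hG2sub ha.1⟩⟩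
          rw [hG2X, mem_singleton_iff] at h7
          rw [h7]; exact hxG1
        have hge2 : (G1 ∪ G2) ∩ E2 = G2 := by
          rw [union_inter_distrib_right, inter_eq_self_of_subset_left hG2sub]
          refine union_eq_right.2 ?_
          intro a ha
          have h7 : a ∈ G1 ∩ X := ⟨ha.1, by rw [hX]; exact ⟨hG1sub ha.1, ha.2⟩⟩
          rw [hG1X, mem_singleton_iff] at h7
          rw [h7]; exact hxG2
        have hgeX : (G1 ∪ G2) ∩ X = {x} := by
          rw [union_inter_distrib_right, hG1X, hG2X, union_self]
        have hGflat : M.IsFlat (G1 ∪ G2) := by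
          rw [hflat]
          exact ⟨union_subset_union hG1sub hG2sub,
            by rw [hge1]; exact hG1flat, by rw [hge2]; exact hG2flat⟩
        have hFsubG : F ⊆ G1 ∪ G2 := by
          intro a ha
          rcases hFsub ha with h | h
          · exact Or.inl (hFG1 ⟨ha, h⟩)
          · exact Or.inr (hFG2 ⟨ha, h⟩)
        refine hstep _ hGflat hFsubG (fun h => hxF (by rw [h]; exact Or.inl hxG1)) ?_
        rw [hw, hw, hge1, hge2, hgeX, hG1rk, hG2rk, hF0, mRk_empty, hsing2 x hxX]
        omega
      · -- F ∩ X = {x} : boundary impossible since then w F = 3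
        exfalso
        have hxFmem : x ∈ F := by
          have h5 : x ∈ F ∩ X := by rw [hxeq]; exact mem_singleton x
          exact h5.1
        have hr1 := hFX1' (F ∩ E1) x hF1 ⟨hxFmem, hXE1 hxX⟩ hxX
        have hr2 := hmeet1 (F ∩ E2) x hF2 (by rw [hE2X, hxeq]) hxX
        have hno : F ∩ X ≠ X := by
          rw [hxeq]
          intro h
          obtain ⟨y, hy, hyx⟩ := Set.exists_ne_of_one_lt_ncard (s := X) (by omega) x
          rw [← h, mem_singleton_iff] at hy
          exact hyx hy
        have hp1 := hd1pos F hF hno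
        have hp2 := hd2pos F hF hno
        have hwFex : 3 < (mRank M1 - mRk M1 (F ∩ E1)) + (mRank M2 - mRk M2 (F ∩ E2)) +
            mRk M2 (F ∩ X) := by rw [← hw]; exact hle3
        rw [hxeq, hsing2 x hxX] at hwFex
        omega
      · -- X ⊆ F : boundary impossible since then w F = 2
        exfalso
        have hXF1 : (F ∩ E1) ∪ X = F ∩ E1 :=
          union_eq_left.2 (fun z hz => ⟨hXF hz, hXE1 hz⟩)
        have hXF2 : (F ∩ E2) ∪ X = F ∩ E2 :=
          union_eq_left.2 (fun z hz => ⟨hXF hz, hXE2 hz⟩)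
        rw [hXF1] at hc1
        rw [hXF2] at hc2
        have hwFex : 3 < (mRank M1 - mRk M1 (F ∩ E1)) + (mRank M2 - mRk M2 (F ∩ E2)) +
            mRk M2 (F ∩ X) := by rw [← hw]; exact hle3
        rw [hXeq, hXrk] at hwFex
        omega
  -- the key rank identity
  have hkey : ∀ F : Set α, M.IsFlat F → mRk M F + w F = mRank M + 2 :=
    fun F hF => le_antisymm (hclaimB (w F) F hF le_rfl) (hclaimA (w F) F hF le_rfl)
    -- final assembly
  intro F hFsub0
  constructor
  · rintro ⟨hFflat, hFrk⟩
    have hkeyF := hkey F hFflat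
    rw [hw] at hkeyF
    obtain ⟨-, hF1, hF2⟩ := (hflat F).1 hFflat
    have hbF1 := hb1 _ hF1
    have hbF2 := hb2 _ hF2
    rcases htri F hFflat with hF0 | ⟨x, hxX, hxeq⟩ | ⟨hXF, hXeq⟩
    · have hρ : mRk M2 (F ∩ X) = 0 := by rw [hF0, mRk_empty]
      have hno : F ∩ X ≠ X := by
        rw [hF0]; intro h
        obtain ⟨x, hx, -⟩ := hpair
        rw [← h] at hx; exact absurd hx (notMem_empty x)
      have hp1 := hd1pos F hFflat hno
      have hp2 := hmeet _ hF2 (by rw [hE2X, hF0])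
      by_cases h1 : mRk M1 (F ∩ E1) + 1 = mRank M1
      · exact Or.inr (Or.inr (Or.inr (Or.inr (Or.inr (Or.inl
          ⟨hF0, ⟨hF1, h1⟩, ⟨hF2, by omega⟩⟩)))))
      · exact Or.inr (Or.inr (Or.inr (Or.inr (Or.inr (Or.inr
          ⟨hF0, ⟨hF1, by omega⟩, ⟨hF2, by omega⟩⟩)))))
    · have hρ : mRk M2 (F ∩ X) = 1 := by rw [hxeq]; exact hsing2 x hxX
      have hcard : (F ∩ X).ncard = 1 := by rw [hxeq]; exact ncard_singleton x
      have hno : F ∩ X ≠ X := by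
        rw [hxeq]; intro h
        obtain ⟨y, hy, hyx⟩ := Set.exists_ne_of_one_lt_ncard (s := X) (by omega) x
        rw [← h, mem_singleton_iff] at hy
        exact hyx hy
      have hp1 := hd1pos F hFflat hno
      have hp2 := hd2pos F hFflat hno
      by_cases h1 : mRk M1 (F ∩ E1) + 1 = mRank M1
      · exact Or.inr (Or.inr (Or.inr (Or.inl ⟨hcard, ⟨hF1, h1⟩, ⟨hF2, by omega⟩⟩)))
      · exact Or.inr (Or.inr (Or.inr (Or.inr (Or.inl
          ⟨hcard, ⟨hF1, by omega⟩, ⟨hF2, by omega⟩⟩))))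
    · have hρ : mRk M2 (F ∩ X) = 2 := by rw [hXeq, hXrk]
      have hXF1 : X ⊆ F ∩ E1 := fun z hz => ⟨hXF hz, hXE1 hz⟩
      have hXF2 : X ⊆ F ∩ E2 := fun z hz => ⟨hXF hz, hXE2 hz⟩
      by_cases h1 : mRank M1 ≤ mRk M1 (F ∩ E1)
      · have hfe := hfull1 _ hF1 h1
        have hE1F : E1 ⊆ F := by rw [← hfe]; exact inter_subset_left
        exact Or.inl ⟨hE1F, ⟨hF2, by omega⟩, hXF2⟩
      by_cases h2 : mRank M2 ≤ mRk M2 (F ∩ E2)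
      · have hfe := hfull2 _ hF2 h2
        have hE2F : E2 ⊆ F := by rw [← hfe]; exact inter_subset_left
        exact Or.inr (Or.inl ⟨hE2F, ⟨hF1, by omega⟩, hXF1⟩)
      · exact Or.inr (Or.inr (Or.inl ⟨⟨hF1, by omega⟩, hXF1, ⟨hF2, by omega⟩, hXF2⟩))
  · intro hcase
    have hconc : ∀ _ : M1.IsFlat (F ∩ E1), ∀ _ : M2.IsFlat (F ∩ E2),
        (mRank M1 - mRk M1 (F ∩ E1)) + (mRank M2 - mRk M2 (F ∩ E2)) + mRk M2 (F ∩ X) = 4 →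
        IsCr2Flat M F := by
      intro hF1 hF2 h4
      have hFflat : M.IsFlat F := (hflat F).2 ⟨hFsub0, hF1, hF2⟩
      have hkeyF := hkey F hFflat
      rw [hw, h4] at hkeyF
      exact ⟨hFflat, by omega⟩
    rcases hcase with ⟨hE1F, ⟨hF2, h2⟩, hXF2⟩ | ⟨hE2F, ⟨hF1, h1⟩, hXF1⟩ |
      ⟨⟨hF1, h1⟩, hXF1, ⟨hF2, h2⟩, hXF2⟩ | ⟨hcard, ⟨hF1, h1⟩, ⟨hF2, h2⟩⟩ |
      ⟨hcard, ⟨hF1, h1⟩, ⟨hF2, h2⟩⟩ | ⟨h0, ⟨hF1, h1⟩, ⟨hF2, h2⟩⟩ | ⟨h0, ⟨hF1, h1⟩, ⟨hF2, h2⟩⟩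
    · have hfe : F ∩ E1 = E1 := inter_eq_self_of_subset_right hE1F
      have hXeq : F ∩ X = X := inter_eq_self_of_subset_right (hXF2.trans inter_subset_left)
      refine hconc (by rw [hfe]; exact hflatE1) hF2 ?_
      rw [hfe, hR1E, hXeq, hXrk]
      have := hb2 _ hF2
      omega
    · have hfe : F ∩ E2 = E2 := inter_eq_self_of_subset_right hE2F
      have hXeq : F ∩ X = X := inter_eq_self_of_subset_right (hXF1.trans inter_subset_left)
      refine hconc hF1 (by rw [hfe]; exact hflatE2) ?_
      rw [hfe, hR2E, hXeq, hXrk]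
      have := hb1 _ hF1
      omega
    · have hXeq : F ∩ X = X := inter_eq_self_of_subset_right (hXF1.trans inter_subset_left)
      refine hconc hF1 hF2 ?_
      rw [hXeq, hXrk]
      omega
    · obtain ⟨x, hxeq⟩ := ncard_eq_one.1 hcard
      have hxX : x ∈ X := by
        have h5 : x ∈ F ∩ X := by rw [hxeq]; exact mem_singleton x
        exact h5.2
      refine hconc hF1 hF2 ?_
      rw [hxeq, hsing2 x hxX]
      omega
    · obtain ⟨x, hxeq⟩ := ncard_eq_one.1 hcard
      have hxX : x ∈ X := by
        have h5 : x ∈ F ∩ X := by rw [hxeq]; exact mem_singleton x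
        exact h5.2
      refine hconc hF1 hF2 ?_
      rw [hxeq, hsing2 x hxX]
      omega
    · refine hconc hF1 hF2 ?_
      rw [h0, mRk_empty]
      omega
    · refine hconc hF1 hF2 ?_
      rw [h0, mRk_empty]
      omega
end
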